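/- arXiv:2206.06889 — 6 statements merged into one kernel-verified Lean document; each statement's English description precedes it below -/
import Mathlib

section
/- Let ℓ ≥ 2, j ∈ ℤ/ℓℤ, d ∈ ℤ^(ℤ/ℓℤ) and θ ∈ ℂ^(ℤ/ℓℤ). Then s_j(d)·s_j(θ) = d·θ − δ_{j,0}·θ_0, where d·θ = Σ_{i ∈ ℤ/ℓℤ} d_i·θ_i and δ_{j,0} is the Kronecker delta. -/
namespace CM

/-- The (non-linear) action of the simple reflection `s_j` on `ℤ^(ℤ/ℓℤ)`. -/
def sInt (ℓ : ℕ) (j : ZMod ℓ) (d : ZMod ℓ → ℤ) : ZMod ℓ → ℤ := fun i =>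
  if i = j then (if j = 0 then 1 else 0) + d (j + 1) + d (j - 1) - d j else d i

/-- The linear action of the simple reflection `s_j` on `ℂ^(ℤ/ℓℤ)`.
For `i ≠ j` the coefficient of `θ j` is the number of arrows between `i` and `j`
(which is `2` when `ℓ = 2`). -/
def sC (ℓ : ℕ) (j : ZMod ℓ) (θ : ZMod ℓ → ℂ) : ZMod ℓ → ℂ := fun i =>
  if i = j then -θ j
  else θ i + ((if i = j - 1 then 1 else 0) + (if i = j + 1 then 1 else 0) : ℂ) * θ j

/-- `s_j(d) · s_j(θ) = d · θ - δ_{j,0} · θ_0`. -/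
theorem sj_pairing (ℓ : ℕ) [NeZero ℓ] (hℓ : 2 ≤ ℓ) (j : ZMod ℓ)
    (d : ZMod ℓ → ℤ) (θ : ZMod ℓ → ℂ) :
    ∑ i : ZMod ℓ, (sInt ℓ j d i : ℂ) * sC ℓ j θ i =
      (∑ i : ZMod ℓ, (d i : ℂ) * θ i) - (if j = 0 then θ 0 else 0) := by
  haveI : Fact (1 < ℓ) := ⟨hℓ⟩
  have h10 : (1 : ZMod ℓ) ≠ 0 := one_ne_zero
  have hm1 : j - 1 ≠ j := fun h => h10 (sub_eq_self.mp h)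
  have hp1 : j + 1 ≠ j := fun h => h10 (by simpa using h)
  rw [← Finset.sum_erase_add _ _ (Finset.mem_univ j),
    ← Finset.sum_erase_add _ _ (Finset.mem_univ j)]
  have hs : ∀ i ∈ Finset.univ.erase j, ((sInt ℓ j d i : ℂ) * sC ℓ j θ i)
      = (d i : ℂ) * θ i + ((if i = j - 1 then (d i : ℂ) * θ j else 0)
        + (if i = j + 1 then (d i : ℂ) * θ j else 0)) := by
    intro i hi
    have hij : i ≠ j := Finset.ne_of_mem_erase hi
    simp only [sInt, sC, if_neg hij]
    split_ifs <;> push_cast <;> ring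
  rw [Finset.sum_congr rfl hs, Finset.sum_add_distrib, Finset.sum_add_distrib,
    Finset.sum_ite_eq', Finset.sum_ite_eq']
  have hmem1 : j - 1 ∈ Finset.univ.erase j := Finset.mem_erase.mpr ⟨hm1, Finset.mem_univ _⟩
  have hmem2 : j + 1 ∈ Finset.univ.erase j := Finset.mem_erase.mpr ⟨hp1, Finset.mem_univ _⟩
  rw [if_pos hmem1, if_pos hmem2]
  simp only [sInt, sC, if_pos rfl]
  by_cases hj : j = 0
  · subst hj; simp only [if_pos rfl]; push_cast; ring
  · simp only [if_neg hj]; push_cast; ring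

end CM
end

section
/- Let ℓ ≥ 3. On each of ℤ^(ℤ/ℓℤ) and ℂ^(ℤ/ℓℤ), the operators s_j satisfy the Coxeter relations of the affine Weyl group of type Ã_{ℓ−1}: s_j∘s_j = id for all j ∈ ℤ/ℓℤ; s_i∘s_j = s_j∘s_i whenever i ∉ {j−1, j, j+1} in ℤ/ℓℤ; and s_j∘s_{j+1}∘s_j = s_{j+1}∘s_j∘s_{j+1} for all j ∈ ℤ/ℓℤ. Consequently these assignments on generators extend to actions of the affine Weyl group of type Ã_{ℓ−1} on ℤ^(ℤ/ℓℤ) and on ℂ^(ℤ/ℓℤ). -/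
namespace CM

/-- The Coxeter matrix of affine type `Ã_{ℓ-1}` (for `ℓ ≥ 3`): vertices `ℤ/ℓℤ`,
with an edge between `i` and `i + 1` for each `i`. -/
def affineA (ℓ : ℕ) : CoxeterMatrix (ZMod ℓ) where
  M := Matrix.of fun i j => if i = j then 1 else if j = i + 1 ∨ i = j + 1 then 3 else 2
  isSymm := by
    ext i j
    simp only [Matrix.transpose_apply, Matrix.of_apply]
    by_cases h : i = j
    · subst h; simp
    · rw [if_neg (Ne.symm h), if_neg h]
      exact if_congr or_comm rfl rfl
  diagonal := fun i => by simp
  off_diagonal := fun i i' h => by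
    simp only [Matrix.of_apply, if_neg h]
    split_ifs <;> omega


section Aux

variable {ℓ : ℕ}

lemma end_sq_one {X : Type*} {a b : Function.End X} (ha : a * a = 1) (hb : b * b = 1)
    (h : a * b = b * a) : (a * b) ^ 2 = 1 := by
  rw [pow_two, mul_assoc, ← mul_assoc b a b, ← h, mul_assoc, hb, mul_one, ha]

lemma end_cube_one {X : Type*} {a b : Function.End X} (ha : a * a = 1) (hb : b * b = 1)
    (h : a * b * a = b * a * b) : (a * b) ^ 3 = 1 := by
  have h' : b * (a * b) = a * (b * a) := by rw [← mul_assoc, ← h, mul_assoc]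
  calc (a * b) ^ 3 = a * (b * (a * (b * (a * b)))) := by
        simp only [pow_succ, pow_zero, one_mul, mul_assoc]
  _ = a * (b * (a * (a * (b * a)))) := by rw [h']
  _ = a * (b * (b * a)) := by rw [← mul_assoc a a, ha, one_mul]
  _ = a * a := by rw [← mul_assoc b b, hb, one_mul]
  _ = 1 := ha

variable (h1 : (1 : ZMod ℓ) ≠ 0) (h2 : (2 : ZMod ℓ) ≠ 0)
include h1 h2

lemma sInt_invol (j : ZMod ℓ) (d : ZMod ℓ → ℤ) : sInt ℓ j (sInt ℓ j d) = d := by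
  have f1 : j + 1 ≠ j := fun h => h1 (by linear_combination h)
  have f2 : j - 1 ≠ j := fun h => h1 (by linear_combination -h)
  funext k
  simp only [sInt]
  split_ifs <;> subst_vars <;> first | ring1 | tauto | simp_all

lemma sC_invol (j : ZMod ℓ) (θ : ZMod ℓ → ℂ) : sC ℓ j (sC ℓ j θ) = θ := by
  have f1 : j + 1 ≠ j := fun h => h1 (by linear_combination h)
  have f2 : j - 1 ≠ j := fun h => h1 (by linear_combination -h)
  have f3 : j - 1 ≠ j + 1 := fun h => h2 (by linear_combination -h)
  have f4 : j + 1 ≠ j - 1 := fun h => h2 (by linear_combination h)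
  funext k
  simp only [sC]
  split_ifs <;> subst_vars <;> first | ring1 | tauto | simp_all

lemma sInt_comm {i j : ZMod ℓ} (g1 : i ≠ j - 1) (g2 : i ≠ j) (g3 : i ≠ j + 1)
    (d : ZMod ℓ → ℤ) : sInt ℓ i (sInt ℓ j d) = sInt ℓ j (sInt ℓ i d) := by
  have g4 : j ≠ i - 1 := fun h => g3 (by linear_combination -h)
  have g5 : j ≠ i + 1 := fun h => g1 (by linear_combination -h)
  have g6 : j ≠ i := fun h => g2 h.symm
  have g7 : i + 1 ≠ j := fun h => g1 (by linear_combination h)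
  have g8 : i - 1 ≠ j := fun h => g3 (by linear_combination h)
  have g9 : j + 1 ≠ i := fun h => g3 (by linear_combination -h)
  have g10 : j - 1 ≠ i := fun h => g1 (by linear_combination -h)
  funext k
  simp only [sInt]
  split_ifs <;> subst_vars <;> first | ring1 | tauto | simp_all

lemma sC_comm {i j : ZMod ℓ} (g1 : i ≠ j - 1) (g2 : i ≠ j) (g3 : i ≠ j + 1)
    (θ : ZMod ℓ → ℂ) : sC ℓ i (sC ℓ j θ) = sC ℓ j (sC ℓ i θ) := by
  have g4 : j ≠ i - 1 := fun h => g3 (by linear_combination -h)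
  have g5 : j ≠ i + 1 := fun h => g1 (by linear_combination -h)
  have g6 : j ≠ i := fun h => g2 h.symm
  have g7 : i + 1 ≠ j := fun h => g1 (by linear_combination h)
  have g8 : i - 1 ≠ j := fun h => g3 (by linear_combination h)
  have g9 : j + 1 ≠ i := fun h => g3 (by linear_combination -h)
  have g10 : j - 1 ≠ i := fun h => g1 (by linear_combination -h)
  funext k
  simp only [sC]
  split_ifs <;> subst_vars <;> first | ring1 | tauto | simp_all

lemma sInt_braid (j : ZMod ℓ) (d : ZMod ℓ → ℤ) :
    sInt ℓ j (sInt ℓ (j + 1) (sInt ℓ j d)) =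
      sInt ℓ (j + 1) (sInt ℓ j (sInt ℓ (j + 1) d)) := by
  have f1 : j + 1 ≠ j := fun h => h1 (by linear_combination h)
  have f2 : j - 1 ≠ j := fun h => h1 (by linear_combination -h)
  have f3 : j - 1 ≠ j + 1 := fun h => h2 (by linear_combination -h)
  have f4 : j + 1 - 1 = j := by ring
  have f5 : j + 1 + 1 ≠ j + 1 := fun h => h1 (by linear_combination h)
  have f6 : j + 1 + 1 ≠ j := fun h => h2 (by linear_combination h)
  have f7 : j ≠ j + 1 := fun h => h1 (by linear_combination -h)
  have f8 : ¬(j = 0 ∧ j + 1 = 0) := by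
    rintro ⟨a, b⟩; exact h1 (by linear_combination b - a)
  funext k
  simp only [sInt, f4]
  split_ifs <;> subst_vars <;> first | ring1 | tauto | simp_all

lemma sC_braid (j : ZMod ℓ) (θ : ZMod ℓ → ℂ) :
    sC ℓ j (sC ℓ (j + 1) (sC ℓ j θ)) =
      sC ℓ (j + 1) (sC ℓ j (sC ℓ (j + 1) θ)) := by
  have f1 : j + 1 ≠ j := fun h => h1 (by linear_combination h)
  have f2 : j - 1 ≠ j := fun h => h1 (by linear_combination -h)
  have f3 : j - 1 ≠ j + 1 := fun h => h2 (by linear_combination -h)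
  have f4 : j + 1 - 1 = j := by ring
  have f5 : j + 1 + 1 ≠ j + 1 := fun h => h1 (by linear_combination h)
  have f6 : j + 1 + 1 ≠ j := fun h => h2 (by linear_combination h)
  have f7 : j ≠ j + 1 := fun h => h1 (by linear_combination -h)
  have f9 : j + 1 ≠ j - 1 := fun h => h2 (by linear_combination h)
  funext k
  simp only [sC, f4]
  split_ifs <;> subst_vars <;> first | ring1 | tauto | simp_all

end Aux

lemma one_ne_zero_zmod (ℓ : ℕ) [NeZero ℓ] (hℓ : 3 ≤ ℓ) : (1 : ZMod ℓ) ≠ 0 := by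
  have : ((1 : ℕ) : ZMod ℓ) ≠ 0 := by
    rw [Ne, ZMod.natCast_eq_zero_iff]
    intro h
    exact absurd (Nat.le_of_dvd one_pos h) (by omega)
  simpa using this

lemma two_ne_zero_zmod (ℓ : ℕ) [NeZero ℓ] (hℓ : 3 ≤ ℓ) : (2 : ZMod ℓ) ≠ 0 := by
  have : ((2 : ℕ) : ZMod ℓ) ≠ 0 := by
    rw [Ne, ZMod.natCast_eq_zero_iff]
    intro h
    exact absurd (Nat.le_of_dvd two_pos h) (by omega)
  simpa using this

/-- liftability of a family of involutions satisfying commutations and braids. -/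
lemma isLiftable_affineA {ℓ : ℕ} [NeZero ℓ] (hℓ : 3 ≤ ℓ) {X : Type*}
    (f : ZMod ℓ → Function.End X)
    (hinv : ∀ j, f j * f j = 1)
    (hcomm : ∀ i j : ZMod ℓ, i ≠ j - 1 → i ≠ j → i ≠ j + 1 → f i * f j = f j * f i)
    (hbraid : ∀ j : ZMod ℓ, f j * f (j + 1) * f j = f (j + 1) * f j * f (j + 1)) :
    (affineA ℓ).IsLiftable f := by
  have h1 := one_ne_zero_zmod ℓ hℓ
  intro i j
  show (f i * f j) ^ (Matrix.of fun i j =>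
    if i = j then 1 else if j = i + 1 ∨ i = j + 1 then 3 else 2 : Matrix _ _ ℕ) i j = 1
  rw [Matrix.of_apply]
  split_ifs with h h'
  · subst h; rw [pow_one]; exact hinv i
  · rcases h' with h' | h'
    · subst h'
      exact end_cube_one (hinv i) (hinv (i + 1)) (hbraid i)
    · subst h'
      exact end_cube_one (hinv (j + 1)) (hinv j) (hbraid j).symm
  · push_neg at h'
    refine end_sq_one (hinv i) (hinv j) (hcomm i j ?_ h ?_)
    · exact fun hh => h'.1 (by linear_combination -hh)
    · exact fun hh => h'.2 (by linear_combination hh)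

/-- For `ℓ ≥ 3`, the operators `s_j` on `ℤ^(ℤ/ℓℤ)` and on `ℂ^(ℤ/ℓℤ)`
satisfy the Coxeter relations of the affine Weyl group of type `Ã_{ℓ-1}`:
they are involutions, commute at distance `≥ 2`, and satisfy the braid relations;
consequently they extend to actions of the affine Weyl group on both spaces. -/
theorem affine_weyl_relations (ℓ : ℕ) [NeZero ℓ] (hℓ : 3 ≤ ℓ) :
    (∀ (j : ZMod ℓ) (d : ZMod ℓ → ℤ), sInt ℓ j (sInt ℓ j d) = d) ∧
    (∀ (j : ZMod ℓ) (θ : ZMod ℓ → ℂ), sC ℓ j (sC ℓ j θ) = θ) ∧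
    (∀ i j : ZMod ℓ, i ≠ j - 1 → i ≠ j → i ≠ j + 1 →
      (∀ d : ZMod ℓ → ℤ, sInt ℓ i (sInt ℓ j d) = sInt ℓ j (sInt ℓ i d)) ∧
      (∀ θ : ZMod ℓ → ℂ, sC ℓ i (sC ℓ j θ) = sC ℓ j (sC ℓ i θ))) ∧
    (∀ j : ZMod ℓ,
      (∀ d : ZMod ℓ → ℤ,
        sInt ℓ j (sInt ℓ (j + 1) (sInt ℓ j d)) =
          sInt ℓ (j + 1) (sInt ℓ j (sInt ℓ (j + 1) d))) ∧
      (∀ θ : ZMod ℓ → ℂ,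
        sC ℓ j (sC ℓ (j + 1) (sC ℓ j θ)) =
          sC ℓ (j + 1) (sC ℓ j (sC ℓ (j + 1) θ)))) ∧
    (∃ φ : (affineA ℓ).Group →* Function.End (ZMod ℓ → ℤ),
      ∀ j : ZMod ℓ, φ ((affineA ℓ).simple j) = sInt ℓ j) ∧
    (∃ φ : (affineA ℓ).Group →* Function.End (ZMod ℓ → ℂ),
      ∀ j : ZMod ℓ, φ ((affineA ℓ).simple j) = sC ℓ j) := by
  have h1 := one_ne_zero_zmod ℓ hℓ
  have h2 := two_ne_zero_zmod ℓ hℓ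
  refine ⟨sInt_invol h1 h2, sC_invol h1 h2,
    fun i j g1 g2 g3 => ⟨sInt_comm h1 h2 g1 g2 g3, sC_comm h1 h2 g1 g2 g3⟩,
    fun j => ⟨sInt_braid h1 h2 j, sC_braid h1 h2 j⟩, ?_, ?_⟩
  · have hl : (affineA ℓ).IsLiftable (G := Function.End (ZMod ℓ → ℤ)) (fun j => sInt ℓ j) :=
      isLiftable_affineA hℓ _ (fun j => funext (sInt_invol h1 h2 j))
        (fun i j g1 g2 g3 => funext (sInt_comm h1 h2 g1 g2 g3))
        (fun j => funext (sInt_braid h1 h2 j))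
    exact ⟨(affineA ℓ).toCoxeterSystem.lift ⟨_, hl⟩,
      fun j => (affineA ℓ).toCoxeterSystem.lift_apply_simple hl j⟩
  · have hl : (affineA ℓ).IsLiftable (G := Function.End (ZMod ℓ → ℂ)) (fun j => sC ℓ j) :=
      isLiftable_affineA hℓ _ (fun j => funext (sC_invol h1 h2 j))
        (fun i j g1 g2 g3 => funext (sC_comm h1 h2 g1 g2 g3))
        (fun j => funext (sC_braid h1 h2 j))
    exact ⟨(affineA ℓ).toCoxeterSystem.lift ⟨_, hl⟩,
      fun j => (affineA ℓ).toCoxeterSystem.lift_apply_simple hl j⟩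


end CM
end

section
/- Let ℓ ≥ 1 and let ν be an ℓ-core. Then for every i ∈ ℤ/ℓℤ, ν does not simultaneously have an i-addable box and an i-removable box. -/
/-!
Encode a Young diagram `ν` by its beta-set `B = {λ_r - r - 1 | r ∈ ℕ}` (an abacus with beads on
`B`). A box of content `d` is removable iff `d ∈ B` and `d - 1 ∉ B`, addable iff `d ∉ B` and
`d - 1 ∈ B`, and removing it moves the bead at `d` to `d - 1`. An `i`-addable box together with an
`i`-removable box thus yields `y ≤ x` with `x ∈ B`, `y ∉ B` and `x ≡ y (mod ℓ)`, so some `d ∈ B`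
has `d - ℓ ∉ B`. Sliding the bead at `d` down to `d - ℓ` one box at a time removes `ℓ` boxes of
contents `d - ℓ + 1, …, d`, whose residues are pairwise distinct; so `ν` is not an `ℓ`-core.
-/

namespace CM

/-- The `∞`-residue of a box. -/
def rsd (c : ℕ × ℕ) : ℤ := (c.2 : ℤ) - (c.1 : ℤ)

/-- The `ℓ`-residue of a box. -/
def res (ℓ : ℕ) (c : ℕ × ℕ) : ZMod ℓ := (rsd c : ZMod ℓ)

/-- `Res_ℓ(μ) ∈ ℤ^(ℤ/ℓℤ)`: the number of boxes of each `ℓ`-residue. -/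
def Res (ℓ : ℕ) (μ : YoungDiagram) : ZMod ℓ → ℤ := fun i =>
  ((μ.cells.filter (fun c => res ℓ c = i)).card : ℤ)

/-- The constant vector `δ_ℓ = (1,…,1)`. -/
def delta (ℓ : ℕ) : ZMod ℓ → ℤ := fun _ => 1

/-- A box is removable if deleting it leaves a Young diagram. -/
def IsRemovable (μ : YoungDiagram) (c : ℕ × ℕ) : Prop :=
  c ∈ μ.cells ∧ ∃ ν : YoungDiagram, ν.cells = μ.cells.erase c

/-- A box is addable if adjoining it yields a Young diagram. -/
def IsAddable (μ : YoungDiagram) (c : ℕ × ℕ) : Prop :=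
  c ∉ μ.cells ∧ ∃ ν : YoungDiagram, ν.cells = insert c μ.cells

/-- One step: delete one removable box. -/
def RemoveStep (μ ν : YoungDiagram) : Prop :=
  ∃ c, IsRemovable μ c ∧ ν.cells = μ.cells.erase c

/-- `ν` is obtainable from `μ` by successively deleting removable boxes. -/
def Obtainable (μ ν : YoungDiagram) : Prop :=
  Relation.ReflTransGen RemoveStep μ ν

/-- `λ` is an `ℓ`-core: no partition obtainable from `λ` by deleting removable boxes
differs from `λ` by exactly `ℓ` boxes of pairwise distinct `ℓ`-residues. -/
def IsCore (ℓ : ℕ) (lam : YoungDiagram) : Prop :=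
  ¬ ∃ μ : YoungDiagram, Obtainable lam μ ∧ (lam.cells \ μ.cells).card = ℓ ∧
      Set.InjOn (res ℓ) ↑(lam.cells \ μ.cells)

/-- One step of the `ℓ`-core process: delete (via removable-box deletions) `ℓ` boxes
of pairwise distinct `ℓ`-residues. -/
def CoreStep (ℓ : ℕ) (μ ν : YoungDiagram) : Prop :=
  Obtainable μ ν ∧ (μ.cells \ ν.cells).card = ℓ ∧
    Set.InjOn (res ℓ) ↑(μ.cells \ ν.cells)

/-- `ν` is the `ℓ`-core of `λ`: it is an `ℓ`-core reached from `λ` by the core process. -/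
def ReachesCore (ℓ : ℕ) (lam ν : YoungDiagram) : Prop :=
  Relation.ReflTransGen (CoreStep ℓ) lam ν ∧ IsCore ℓ ν

open YoungDiagram

-- `beta ν r` is the content of the last box of row `r`, or of the virtual box just left of the
-- first column when row `r` is empty.
def beta (ν : YoungDiagram) (r : ℕ) : ℤ := (ν.rowLen r : ℤ) - r - 1

def betaSet (ν : YoungDiagram) : Set ℤ := Set.range (beta ν)

lemma beta_strictAnti (ν : YoungDiagram) : StrictAnti (beta ν) :=
  strictAnti_nat_of_succ_lt fun r => by
    have := ν.rowLen_anti r (r + 1) r.le_succ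
    simp only [beta]; push_cast; omega

lemma _root_.Function.Injective.range_update {α β : Type*} [DecidableEq α] {f : α → β}
    (hf : Function.Injective f) (a : α) (b : β) :
    Set.range (Function.update f a b) = insert b (Set.range f \ {f a}) := by
  ext y
  simp only [Set.mem_range, Set.mem_insert_iff, Set.mem_sdiff, Set.mem_singleton_iff]
  constructor
  · rintro ⟨x, rfl⟩
    by_cases hx : x = a
    · subst hx; simp
    · exact Or.inr ⟨⟨x, by simp [hx]⟩, by simpa [hx] using hf.ne hx⟩
  · rintro (rfl | ⟨⟨x, rfl⟩, hxa⟩)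
    · exact ⟨a, by simp⟩
    · exact ⟨x, by simp [show x ≠ a by rintro rfl; exact hxa rfl]⟩

lemma _root_.StrictAnti.notMem_range_of_lt_of_lt {f : ℕ → ℤ} (hf : StrictAnti f) {r : ℕ} {x : ℤ}
    (h₁ : f (r + 1) < x) (h₂ : x < f r) : x ∉ Set.range f := by
  rintro ⟨j, rfl⟩
  have := hf.lt_iff_gt.1 h₁
  have := hf.lt_iff_gt.1 h₂
  omega

lemma _root_.YoungDiagram.rowLen_eq_of_forall_mem_iff {μ : YoungDiagram} {r n : ℕ}
    (h : ∀ s, (r, s) ∈ μ ↔ s < n) : μ.rowLen r = n :=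
  eq_of_forall_lt_iff fun s => mem_iff_lt_rowLen.symm.trans (h s)

lemma isRemovable_iff {ν : YoungDiagram} {c : ℕ × ℕ} :
    IsRemovable ν c ↔ c ∈ ν.cells ∧ ∀ c' ∈ ν.cells, c ≤ c' → c' = c := by
  refine ⟨fun ⟨hc, ν', hν'⟩ => ⟨hc, fun c' hc' hle => ?_⟩, fun ⟨hc, hmax⟩ => ⟨hc, ?_⟩⟩
  · by_contra hne
    have hc'ν' : c' ∈ ν'.cells := by rw [hν']; exact Finset.mem_erase.2 ⟨hne, hc'⟩
    have : c ∈ ν'.cells := ν'.isLowerSet hle hc'ν'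
    simp [hν'] at this
  · refine ⟨⟨ν.cells.erase c, fun a b hba ha => ?_⟩, rfl⟩
    obtain ⟨hac, haν⟩ := Finset.mem_erase.1 ha
    refine Finset.mem_erase.2 ⟨?_, ν.isLowerSet hba haν⟩
    rintro rfl
    exact hac (hmax a haν hba)

lemma IsAddable.mem_of_lt {ν : YoungDiagram} {c c' : ℕ × ℕ} (h : IsAddable ν c) (hlt : c' < c) :
    c' ∈ ν.cells := by
  obtain ⟨-, ν', hν'⟩ := h
  have hc : c ∈ ν'.cells := by simp [hν']
  have : c' ∈ ν'.cells := ν'.isLowerSet hlt.le hc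
  simpa [hν', hlt.ne] using this

lemma Obtainable.cells_subset {μ ν : YoungDiagram} (h : Obtainable μ ν) : ν.cells ⊆ μ.cells := by
  induction h with
  | refl => exact subset_rfl
  | tail _ hstep ih =>
    obtain ⟨c, -, hcells⟩ := hstep
    exact hcells ▸ (Finset.erase_subset _ _).trans ih

lemma IsRemovable.rsd_mem_betaSet {ν : YoungDiagram} {c : ℕ × ℕ} (h : IsRemovable ν c) :
    rsd c ∈ betaSet ν ∧ rsd c - 1 ∉ betaSet ν := by
  obtain ⟨r, s⟩ := c
  obtain ⟨hc, hmax⟩ := isRemovable_iff.1 h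
  have hright : (r, s + 1) ∉ ν.cells := fun h' => by simpa using hmax _ h' (by simp)
  have hbelow : (r + 1, s) ∉ ν.cells := fun h' => by simpa using hmax _ h' (by simp)
  simp only [mem_cells, mem_iff_lt_rowLen] at hc hright hbelow
  have hr : beta ν r = rsd (r, s) := by simp only [beta, rsd]; omega
  have hr1 : beta ν (r + 1) < rsd (r, s) - 1 := by simp only [beta, rsd]; push_cast; omega
  exact ⟨⟨r, hr⟩, (beta_strictAnti ν).notMem_range_of_lt_of_lt hr1 (by omega)⟩

lemma IsAddable.rsd_mem_betaSet {ν : YoungDiagram} {c : ℕ × ℕ} (h : IsAddable ν c) :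
    rsd c ∉ betaSet ν ∧ rsd c - 1 ∈ betaSet ν := by
  obtain ⟨r, s⟩ := c
  have hc : ν.rowLen r ≤ s := by simpa [mem_iff_lt_rowLen] using h.1
  have hleft : s ≤ ν.rowLen r := by
    rcases Nat.eq_zero_or_pos s with hs | hs
    · omega
    · have := h.mem_of_lt (c' := (r, s - 1)) (by simp [Prod.lt_iff]; omega)
      simp only [mem_cells, mem_iff_lt_rowLen] at this
      omega
  have hr : beta ν r = rsd (r, s) - 1 := by simp only [beta, rsd]; omega
  refine ⟨?_, ⟨r, hr⟩⟩
  rcases Nat.eq_zero_or_pos r with rfl | hr0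
  · rintro ⟨j, hj⟩
    have := (beta_strictAnti ν).antitone (Nat.zero_le j)
    omega
  · have habove := h.mem_of_lt (c' := (r - 1, s)) (by simp [Prod.lt_iff]; omega)
    simp only [mem_cells, mem_iff_lt_rowLen] at habove
    refine (beta_strictAnti ν).notMem_range_of_lt_of_lt (r := r - 1) ?_ ?_
    · rw [Nat.sub_add_cancel hr0]; omega
    · simp only [beta, rsd]; push_cast [Nat.cast_sub hr0]; omega

lemma exists_removeStep_of_mem_betaSet {ν : YoungDiagram} {p : ℤ} (hp : p ∈ betaSet ν)
    (hp1 : p - 1 ∉ betaSet ν) :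
    ∃ c ν', IsRemovable ν c ∧ ν'.cells = ν.cells.erase c ∧ rsd c = p ∧
      betaSet ν' = insert (p - 1) (betaSet ν \ {p}) := by
  obtain ⟨r, rfl⟩ := hp
  have hlt : ν.rowLen (r + 1) < ν.rowLen r := by
    refine lt_of_le_of_ne (ν.rowLen_anti r (r + 1) r.le_succ) fun heq => hp1 ⟨r + 1, ?_⟩
    simp only [beta, heq]; push_cast; ring
  set c : ℕ × ℕ := (r, ν.rowLen r - 1)
  have hc : IsRemovable ν c := by
    refine isRemovable_iff.2 ⟨by simp [c, mem_iff_lt_rowLen]; omega, ?_⟩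
    rintro ⟨i, j⟩ hij ⟨hri, hj⟩
    simp only [mem_cells, mem_iff_lt_rowLen, c] at hij hri hj ⊢
    have hi : i = r := by
      by_contra hne
      have := ν.rowLen_anti (r + 1) i (by omega)
      omega
    subst hi
    simp only [Prod.mk.injEq, true_and]
    omega
  obtain ⟨-, ν', hν'⟩ := id hc
  have hrow (i : ℕ) : ν'.rowLen i = if i = r then ν.rowLen r - 1 else ν.rowLen i := by
    refine rowLen_eq_of_forall_mem_iff fun s => ?_
    rw [← mem_cells, hν', Finset.mem_erase, mem_cells, mem_iff_lt_rowLen]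
    split_ifs with hi <;> simp [c, hi]; omega
  have hbeta : beta ν' = Function.update (beta ν) r (beta ν r - 1) := by
    funext i
    rcases eq_or_ne i r with rfl | hi
    · simp only [beta, hrow, Function.update_self, if_true]
      push_cast [Nat.cast_sub (by omega : 1 ≤ ν.rowLen i)]
      ring
    · simp only [beta, hrow, Function.update_of_ne hi, hi, if_false]
  refine ⟨c, ν', hc, hν', ?_, ?_⟩
  · simp only [rsd, beta, c]; push_cast [Nat.cast_sub (by omega : 1 ≤ ν.rowLen r)]; ring
  · rw [betaSet, hbeta, (beta_strictAnti ν).injective.range_update]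
    rfl

lemma bijOn_insert_Ioc {s : Set (ℕ × ℕ)} {c : ℕ × ℕ} {d : ℤ} {m : ℕ}
    (hs : Set.BijOn rsd s (Set.Ioc (d - 1 - m) (d - 1))) (hc : rsd c = d) :
    Set.BijOn rsd (insert c s) (Set.Ioc (d - (m + 1 : ℕ)) d) := by
  have hIoc : Set.Ioc (d - (m + 1 : ℕ)) d = insert d (Set.Ioc (d - 1 - m) (d - 1)) := by
    ext e; simp only [Set.mem_Ioc, Set.mem_insert_iff]; push_cast; omega
  have hcs : rsd c ∉ Set.Ioc (d - 1 - m) (d - 1) := by rw [hc]; simp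
  have := hs.insert hcs
  rwa [hc, ← hIoc] at this

-- The `\ {d}` in `hm` lets the induction start from the empty rim hook at `m = 0`.
lemma exists_obtainable_bijOn_Ioc (m : ℕ) {ν : YoungDiagram} {d : ℤ} (hd : d ∈ betaSet ν)
    (hm : d - m ∉ betaSet ν \ {d}) :
    ∃ μ, Obtainable ν μ ∧ Set.BijOn rsd ↑(ν.cells \ μ.cells) (Set.Ioc (d - m) d) ∧
      betaSet μ = insert (d - m) (betaSet ν \ {d}) := by
  induction m generalizing ν d with
  | zero => exact ⟨ν, .refl, by simp, by simp [hd]⟩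
  | succ m ih =>
    have hm' : d - (m + 1 : ℕ) ∉ betaSet ν := fun h => hm ⟨h, by simp; omega⟩
    by_cases hd1 : d - 1 ∈ betaSet ν
    · have hm0 : m ≠ 0 := by rintro rfl; exact hm' (by simpa using hd1)
      obtain ⟨μ', hνμ', hbij, hμ'⟩ := ih hd1 fun h => hm' (by push_cast; grind)
      obtain ⟨c, μ, hc, hμ, hcd, hμβ⟩ := exists_removeStep_of_mem_betaSet (ν := μ') (p := d)
        (by rw [hμ']; grind) (by rw [hμ']; grind)
      refine ⟨μ, hνμ'.tail ⟨c, hc, hμ⟩, ?_, ?_⟩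
      · rw [hμ, Finset.sdiff_erase (hνμ'.cells_subset hc.1), Finset.coe_insert]
        exact bijOn_insert_Ioc hbij hcd
      · rw [hμβ, hμ']
        ext e
        push_cast
        grind
    · obtain ⟨c, ν', hc, hν', hcd, hν'β⟩ := exists_removeStep_of_mem_betaSet hd hd1
      obtain ⟨μ, hν'μ, hbij, hμ⟩ := ih (ν := ν') (d := d - 1) (by rw [hν'β]; exact .inl rfl)
        (by rw [hν'β]; push_cast at hm'; grind)
      refine ⟨μ, .head ⟨c, hc, hν'⟩ hν'μ, ?_, ?_⟩
      · have hcμ : c ∉ μ.cells := fun h => by simpa [hν'] using hν'μ.cells_subset h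
        rw [← Finset.insert_erase hc.1, Finset.insert_sdiff_of_notMem _ hcμ, ← hν',
          Finset.coe_insert]
        exact bijOn_insert_Ioc hbij hcd
      · rw [hμ, hν'β]
        ext e
        push_cast
        grind

lemma exists_mem_sub_notMem {S : Set ℤ} {ℓ : ℕ} {x y : ℤ} (hx : x ∈ S) (hy : y ∉ S)
    (hyx : y ≤ x) (hdvd : (ℓ : ℤ) ∣ x - y) : ∃ d ∈ S, d - ℓ ∉ S := by
  by_contra! hclosed
  have hiter (n : ℕ) : x - ℓ * n ∈ S := by
    induction n with
    | zero => simpa using hx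
    | succ n ih => simpa [mul_add, sub_add_eq_sub_sub] using hclosed _ ih
  obtain ⟨k, hk⟩ := hdvd
  have hy_eq : y = x - ℓ * k.toNat := by
    rcases Nat.eq_zero_or_pos ℓ with rfl | hℓ
    · simp only [Nat.cast_zero, zero_mul] at hk ⊢
      omega
    · have hk0 : 0 ≤ k := by
        by_contra! hk0
        nlinarith [(Nat.cast_pos (α := ℤ)).2 hℓ]
      rw [Int.toNat_of_nonneg hk0]
      linarith
  exact hy (hy_eq ▸ hiter _)

lemma injOn_res_of_bijOn_Ioc {ℓ : ℕ} {s : Set (ℕ × ℕ)} {d : ℤ}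
    (h : Set.BijOn rsd s (Set.Ioc (d - ℓ) d)) : Set.InjOn (res ℓ) s := by
  intro c₁ hc₁ c₂ hc₂ hres
  obtain ⟨hlo₁, hhi₁⟩ := h.mapsTo hc₁
  obtain ⟨hlo₂, hhi₂⟩ := h.mapsTo hc₂
  have hdvd : (ℓ : ℤ) ∣ rsd c₂ - rsd c₁ := (ZMod.intCast_eq_intCast_iff_dvd_sub _ _ _).1 hres
  have habs : |rsd c₂ - rsd c₁| < ℓ := abs_sub_lt_iff.2 ⟨by linarith, by linarith⟩
  exact h.injOn hc₁ hc₂ (sub_eq_zero.1 (Int.eq_zero_of_abs_lt_dvd hdvd habs)).symm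

lemma not_isCore_of_mem_betaSet {ℓ : ℕ} {ν : YoungDiagram} {d : ℤ} (hd : d ∈ betaSet ν)
    (hdℓ : d - ℓ ∉ betaSet ν) : ¬ IsCore ℓ ν := by
  obtain ⟨μ, hνμ, hbij, -⟩ := exists_obtainable_bijOn_Ioc ℓ hd fun h => hdℓ h.1
  refine not_not.2 ⟨μ, hνμ, ?_, injOn_res_of_bijOn_Ioc hbij⟩
  rw [← Finset.coe_Ioc] at hbij
  rw [hbij.finsetCard_eq, Int.card_Ioc]
  omega

theorem core_no_addable_and_removable_general (ℓ : ℕ) (ν : YoungDiagram)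
    (hν : IsCore ℓ ν) (i : ZMod ℓ) :
    ¬ ((∃ b, IsAddable ν b ∧ res ℓ b = i) ∧ (∃ b, IsRemovable ν b ∧ res ℓ b = i)) := by
  rintro ⟨⟨a, ha, rfl⟩, b, hb, hab⟩
  obtain ⟨ha₀, ha₁⟩ := ha.rsd_mem_betaSet
  obtain ⟨hb₀, hb₁⟩ := hb.rsd_mem_betaSet
  have hdvd : (ℓ : ℤ) ∣ rsd a - rsd b := (ZMod.intCast_eq_intCast_iff_dvd_sub _ _ _).1 hab
  obtain ⟨d, hd, hdℓ⟩ : ∃ d ∈ betaSet ν, d - ℓ ∉ betaSet ν := by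
    rcases le_total (rsd a) (rsd b) with hle | hle
    · exact exists_mem_sub_notMem hb₀ ha₀ hle (dvd_sub_comm.1 hdvd)
    · exact exists_mem_sub_notMem ha₁ hb₁ (by omega) (by simpa using hdvd)
  exact not_isCore_of_mem_betaSet hd hdℓ hν

/-- An `ℓ`-core never has simultaneously an `i`-addable box and an
`i`-removable box. -/
theorem core_no_addable_and_removable (ℓ : ℕ) [NeZero ℓ] (ν : YoungDiagram)
    (hν : IsCore ℓ ν) (i : ZMod ℓ) :
    ¬ ((∃ b, IsAddable ν b ∧ res ℓ b = i) ∧ (∃ b, IsRemovable ν b ∧ res ℓ b = i)) :=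
  core_no_addable_and_removable_general ℓ ν hν i

end CM
end

section
/- Let ℓ ≥ 1 and J ⊆ ℤ/ℓℤ. For any partition λ, any two J-cores obtained from λ by successively deleting J-removable boxes coincide; that is, the J-core reached from λ is independent of the order in which J-removable boxes are deleted. -/
namespace CM

/-- A `J`-removable box: a removable box whose `ℓ`-residue lies in `J`. -/
def IsJRemovable (ℓ : ℕ) (J : Set (ZMod ℓ)) (μ : YoungDiagram) (c : ℕ × ℕ) : Prop :=
  IsRemovable μ c ∧ res ℓ c ∈ J

/-- A `J`-core: a partition with no `J`-removable boxes. -/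
def IsJCore (ℓ : ℕ) (J : Set (ZMod ℓ)) (μ : YoungDiagram) : Prop :=
  ∀ c, ¬ IsJRemovable ℓ J μ c

/-- One step: delete one `J`-removable box. -/
def JRemoveStep (ℓ : ℕ) (J : Set (ZMod ℓ)) (μ ν : YoungDiagram) : Prop :=
  ∃ c, IsJRemovable ℓ J μ c ∧ ν.cells = μ.cells.erase c

/-- `ν` is a `J`-core of `λ`, obtained by successively deleting `J`-removable boxes. -/
def JReaches (ℓ : ℕ) (J : Set (ZMod ℓ)) (lam ν : YoungDiagram) : Prop :=
  Relation.ReflTransGen (JRemoveStep ℓ J) lam ν ∧ IsJCore ℓ J ν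


lemma maximal_of_removable {μ : YoungDiagram} {c : ℕ × ℕ} (h : IsRemovable μ c)
    {y : ℕ × ℕ} (hy : y ∈ μ.cells) (hcy : c ≤ y) : y = c := by
  obtain ⟨hc, ν, hν⟩ := h
  by_contra hne
  have hyν : y ∈ ν.cells := by rw [hν]; exact Finset.mem_erase.mpr ⟨hne, hy⟩
  have : c ∈ ν.cells := ν.isLowerSet hcy hyν
  rw [hν] at this
  exact (Finset.mem_erase.mp this).1 rfl

lemma diamond {ℓ : ℕ} {J : Set (ZMod ℓ)} {μ ν₁ ν₂ : YoungDiagram}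
    (h₁ : JRemoveStep ℓ J μ ν₁) (h₂ : JRemoveStep ℓ J μ ν₂) :
    ν₁ = ν₂ ∨ ∃ τ, JRemoveStep ℓ J ν₁ τ ∧ JRemoveStep ℓ J ν₂ τ := by
  obtain ⟨c, ⟨hc, hcJ⟩, hν₁⟩ := h₁
  obtain ⟨d, ⟨hd, hdJ⟩, hν₂⟩ := h₂
  by_cases hcd : c = d
  · left; subst hcd; exact YoungDiagram.ext (hν₁.trans hν₂.symm)
  · right
    have hlower : IsLowerSet (((μ.cells.erase c).erase d : Finset (ℕ × ℕ)) : Set (ℕ × ℕ)) := by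
      intro x y hyx hx
      simp only [Finset.coe_erase, Set.mem_diff, Set.mem_singleton_iff] at hx ⊢
      obtain ⟨⟨hxμ, hxc⟩, hxd⟩ := hx
      have hxμ' : x ∈ μ.cells := hxμ
      have hyμ : y ∈ μ.cells := μ.isLowerSet hyx hxμ'
      refine ⟨⟨hyμ, ?_⟩, ?_⟩
      · rintro rfl
        exact hxc (maximal_of_removable hc hxμ' hyx)
      · rintro rfl
        exact hxd (maximal_of_removable hd hxμ' hyx)
    refine ⟨⟨(μ.cells.erase c).erase d, hlower⟩, ⟨d, ⟨⟨?_, ?_⟩, hdJ⟩, ?_⟩,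
      ⟨c, ⟨⟨?_, ?_⟩, hcJ⟩, ?_⟩⟩
    · rw [hν₁]; exact Finset.mem_erase.mpr ⟨fun h => hcd h.symm, hd.1⟩
    · exact ⟨⟨(μ.cells.erase c).erase d, hlower⟩, by rw [hν₁]⟩
    · rw [hν₁]
    · rw [hν₂]; exact Finset.mem_erase.mpr ⟨hcd, hc.1⟩
    · exact ⟨⟨(μ.cells.erase c).erase d, hlower⟩,
        show (μ.cells.erase c).erase d = ν₂.cells.erase c by
          rw [hν₂]; exact Finset.erase_right_comm⟩
    · show (μ.cells.erase c).erase d = ν₂.cells.erase c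
      rw [hν₂]; exact Finset.erase_right_comm

lemma core_stuck {ℓ : ℕ} {J : Set (ZMod ℓ)} {ν d : YoungDiagram}
    (hcore : IsJCore ℓ J ν) (h : Relation.ReflTransGen (JRemoveStep ℓ J) ν d) : d = ν := by
  rcases h.cases_head with h | ⟨x, hx, _⟩
  · exact h.symm
  · obtain ⟨c, hc, _⟩ := hx; exact absurd hc (hcore c)

/-- The `J`-core of a partition is independent of the order in which
`J`-removable boxes are deleted. -/
theorem jcore_unique (ℓ : ℕ) [NeZero ℓ] (J : Set (ZMod ℓ)) (lam ν₁ ν₂ : YoungDiagram)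
    (h₁ : JReaches ℓ J lam ν₁) (h₂ : JReaches ℓ J lam ν₂) : ν₁ = ν₂ := by
  have hcr := Relation.church_rosser (r := JRemoveStep ℓ J) ?_ h₁.1 h₂.1
  · obtain ⟨d, hd₁, hd₂⟩ := hcr
    rw [← core_stuck h₁.2 hd₁, ← core_stuck h₂.2 hd₂]
  · intro a b c hab hac
    rcases diamond hab hac with rfl | ⟨τ, hbτ, hcτ⟩
    · exact ⟨b, Relation.ReflGen.refl, Relation.ReflTransGen.refl⟩
    · exact ⟨τ, Relation.ReflGen.single hbτ, Relation.ReflTransGen.single hcτ⟩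

end CM
end

section
/- Let ℓ ≥ 1 and θ ∈ ℂ^(ℤ/ℓℤ) with Σ_{i ∈ ℤ/ℓℤ} θ_i ≠ 0. Let Σ_θ ⊆ ℕ^(ℤ/ℓℤ) be the set of dimension vectors of simple θ-representations of the double cyclic quiver. Then Σ_θ is ℤ-linearly independent: if d_1, …, d_k ∈ Σ_θ are pairwise distinct and n_1, …, n_k ∈ ℤ satisfy n_1·d_1 + ⋯ + n_k·d_k = 0 in ℤ^(ℤ/ℓℤ), then n_1 = ⋯ = n_k = 0. -/
/-!
Taking traces in the relations and summing over the vertices shows `∑ θ_i d_i = 0` for the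
dimension vector `d` of any `θ`-representation.

For simple `M`, `N` with `d_M ≠ d_N`, Schur's lemma makes
`φ ↦ (φ X_M - X_N φ, φ Y_M - Y_N φ)` from `E(M, N) = ⊕ Hom(M_i, N_i)` to the space
`F(M, N)` of families indexed by the arrows injective. The trace pairing
`⟨x, ξ⟩ = ∑ tr(ξ_Y x_X) - ∑ tr(ξ_X x_Y)` between `F(M, N)` and `F(N, M)` is perfect, and the
moment map relations make the images of `E(M, N)` and `E(N, M)` orthogonal. Hence
`dim E(M, N) + dim E(N, M) ≤ dim F(M, N)`, i.e. `q(d_M, d_N) ≤ 0` for the symmetric Euler form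
`q(x, y) = ∑ (x_i - x_{i+1}) (y_i - y_{i+1})` of the cyclic quiver.

Given a relation `∑ n_t d_t = 0`, its positive part `u = ∑_{n_t > 0} n_t d_t` equals its negative
part, so `q(u, u) ≤ 0`. As `q` is positive semidefinite with radical `ℤ (1, …, 1)` and
`∑ θ_i u_i = 0` while `∑ θ_i ≠ 0`, we get `u = 0`; since every `d_t` is a nonzero vector of
naturals, no `n_t` is positive, and by symmetry none is negative.
-/

namespace CM

/-- A `θ`-representation of the double cyclic quiver with `ℓ` vertices and
dimension vector `d`.  The moment map relation at the vertex `i + 1` reads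
`X_{i+1} ∘ Y_{i+1} - Y_i ∘ X_i = θ_{i+1} · id`; quantifying over all `i` gives the
relation at every vertex. -/
structure Rep (ℓ : ℕ) (θ : ZMod ℓ → ℂ) (d : ZMod ℓ → ℕ) where
  X : ∀ i : ZMod ℓ, (Fin (d (i + 1)) → ℂ) →ₗ[ℂ] (Fin (d i) → ℂ)
  Y : ∀ i : ZMod ℓ, (Fin (d i) → ℂ) →ₗ[ℂ] (Fin (d (i + 1)) → ℂ)
  rel : ∀ i : ZMod ℓ,
    X (i + 1) ∘ₗ Y (i + 1) - Y i ∘ₗ X i = θ (i + 1) • LinearMap.id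

/-- A subrepresentation: a family of subspaces stable under all the maps. -/
structure Subrep {ℓ : ℕ} {θ : ZMod ℓ → ℂ} {d : ZMod ℓ → ℕ} (R : Rep ℓ θ d) where
  U : ∀ i : ZMod ℓ, Submodule ℂ (Fin (d i) → ℂ)
  hX : ∀ i : ZMod ℓ, ∀ v ∈ U (i + 1), R.X i v ∈ U i
  hY : ∀ i : ZMod ℓ, ∀ v ∈ U i, R.Y i v ∈ U (i + 1)

/-- A representation is simple if `d ≠ 0` and its only subrepresentations are `0` and itself. -/
def IsSimple {ℓ : ℕ} {θ : ZMod ℓ → ℂ} {d : ZMod ℓ → ℕ} (R : Rep ℓ θ d) : Prop :=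
  (∃ i, d i ≠ 0) ∧ ∀ S : Subrep R, (∀ i, S.U i = ⊥) ∨ (∀ i, S.U i = ⊤)

open LinearMap Module

section PairwiseNonpos

variable {R M N ι : Type*} [CommRing R] [LinearOrder R] [IsStrictOrderedRing R]
  [AddCommGroup M] [Module R M] [AddCommGroup N] [Module R N] [Fintype ι]

lemma apply_sum_pos_part_self_eq_zero (B : LinearMap.BilinForm R M)
    (hB : ∀ x, 0 ≤ B x x) {v : ι → M} (hv : Pairwise fun t s => B (v t) (v s) ≤ 0)
    {c : ι → R} (hc : ∑ t, c t • v t = 0) :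
    B (∑ t with 0 < c t, c t • v t) (∑ t with 0 < c t, c t • v t) = 0 := by
  classical
  have hneg : ∑ t with 0 < c t, c t • v t = ∑ t with ¬ 0 < c t, (-c t) • v t := by
    rw [add_eq_zero_iff_eq_neg.mp ((Finset.sum_filter_add_sum_filter_not _ _ _).trans hc)]
    simp [Finset.sum_neg_distrib]
  refine le_antisymm ?_ (hB _)
  conv_lhs => arg 2; rw [hneg]
  simp only [map_sum, LinearMap.sum_apply, map_smul, LinearMap.smul_apply, smul_eq_mul,
    Finset.mul_sum]
  refine Finset.sum_nonpos fun s hs => Finset.sum_nonpos fun t ht => ?_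
  rw [Finset.mem_filter] at ht hs
  have hts : t ≠ s := fun h => hs.2 (h ▸ ht.2)
  exact mul_nonpos_of_nonneg_of_nonpos (neg_nonneg.mpr (not_lt.mp hs.2))
    (mul_nonpos_of_nonneg_of_nonpos ht.2.le (hv hts))

lemma nonpos_of_sum_smul_eq_zero (B : LinearMap.BilinForm R M) (hB : ∀ x, 0 ≤ B x x)
    (f : M →ₗ[R] N) (hBf : ∀ x, B x x = 0 → f x = 0 → x = 0) (g : M →ₗ[R] R)
    {v : ι → M} (hv : Pairwise fun t s => B (v t) (v s) ≤ 0) (hfv : ∀ t, f (v t) = 0)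
    (hgv : ∀ t, 0 < g (v t)) {c : ι → R} (hc : ∑ t, c t • v t = 0) (t : ι) : c t ≤ 0 := by
  classical
  have hu : ∑ t with 0 < c t, c t • v t = 0 :=
    hBf _ (apply_sum_pos_part_self_eq_zero B hB hv hc) (by simp [hfv])
  have hgu := congrArg g hu
  simp only [map_sum, map_smul, smul_eq_mul, map_zero] at hgu
  by_contra! ht
  have := (Finset.sum_eq_zero_iff_of_nonneg fun s hs =>
    (mul_pos (Finset.mem_filter.mp hs).2 (hgv s)).le).mp hgu t (by simp [ht])
  exact (mul_pos ht (hgv t)).ne' this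

lemma linearIndependent_of_pairwise_nonpos (B : LinearMap.BilinForm R M)
    (hB : ∀ x, 0 ≤ B x x) (f : M →ₗ[R] N) (hBf : ∀ x, B x x = 0 → f x = 0 → x = 0)
    (g : M →ₗ[R] R) {v : ι → M} (hv : Pairwise fun t s => B (v t) (v s) ≤ 0)
    (hfv : ∀ t, f (v t) = 0) (hgv : ∀ t, 0 < g (v t)) : LinearIndependent R v := by
  rw [Fintype.linearIndependent_iff]
  intro c hc t
  have hc' : ∑ t, (-c) t • v t = 0 := by simp [neg_smul, hc]
  exact le_antisymm (nonpos_of_sum_smul_eq_zero B hB f hBf g hv hfv hgv hc t)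
    (neg_nonpos.mp (nonpos_of_sum_smul_eq_zero B hB f hBf g hv hfv hgv hc' t))

end PairwiseNonpos

lemma finrank_add_finrank_le_of_flip_injective {K V V' : Type*} [Field K] [AddCommGroup V]
    [Module K V] [FiniteDimensional K V] [AddCommGroup V'] [Module K V']
    {B : V →ₗ[K] V' →ₗ[K] K} (hB : Function.Injective B.flip) (W : Submodule K V)
    (W' : Submodule K V') (hWW' : ∀ x ∈ W, ∀ y ∈ W', B x y = 0) :
    finrank K W + finrank K W' ≤ finrank K V := by
  have hle : W'.map B.flip ≤ W.dualAnnihilator := by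
    rintro _ ⟨y, hy, rfl⟩
    exact (Submodule.mem_dualAnnihilator _).mpr fun x hx => hWW' x hx y hy
  rw [← Subspace.finrank_add_finrank_dualAnnihilator_eq W,
    (Submodule.equivMapOfInjective _ hB W').finrank_eq]
  exact Nat.add_le_add_left (Submodule.finrank_mono hle) _

lemma eq_zero_of_forall_trace_comp_eq_zero {R m n : Type*} [CommRing R] [Fintype m] [Fintype n]
    [DecidableEq m] [DecidableEq n] {g : (n → R) →ₗ[R] (m → R)}
    (h : ∀ f : (m → R) →ₗ[R] (n → R), trace R _ (g ∘ₗ f) = 0) : g = 0 := by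
  apply toMatrix'.injective
  rw [map_zero]
  refine Matrix.ext_iff_trace_mul_right.mpr fun x => ?_
  simpa [← Matrix.trace_toLin'_eq, Matrix.toLin'_mul] using h (Matrix.toLin' x)

lemma trace_commutator_pairing {n₁ n₂ m₁ m₂ : ℕ}
    (x : (Fin n₂ → ℂ) →ₗ[ℂ] (Fin n₁ → ℂ)) (y : (Fin n₁ → ℂ) →ₗ[ℂ] (Fin n₂ → ℂ))
    (u : (Fin m₂ → ℂ) →ₗ[ℂ] (Fin m₁ → ℂ)) (v : (Fin m₁ → ℂ) →ₗ[ℂ] (Fin m₂ → ℂ))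
    (a : (Fin n₁ → ℂ) →ₗ[ℂ] (Fin m₁ → ℂ)) (a' : (Fin n₂ → ℂ) →ₗ[ℂ] (Fin m₂ → ℂ))
    (b : (Fin m₁ → ℂ) →ₗ[ℂ] (Fin n₁ → ℂ)) (b' : (Fin m₂ → ℂ) →ₗ[ℂ] (Fin n₂ → ℂ)) :
    trace ℂ _ ((b' ∘ₗ v - y ∘ₗ b) ∘ₗ (a ∘ₗ x - u ∘ₗ a'))
      - trace ℂ _ ((b ∘ₗ u - x ∘ₗ b') ∘ₗ (a' ∘ₗ y - v ∘ₗ a))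
    = (trace ℂ _ (b ∘ₗ (u ∘ₗ v) ∘ₗ a) - trace ℂ _ (b ∘ₗ a ∘ₗ x ∘ₗ y))
      - (trace ℂ _ (b' ∘ₗ (v ∘ₗ u) ∘ₗ a') - trace ℂ _ (b' ∘ₗ a' ∘ₗ y ∘ₗ x)) := by
  have cycle {p q : ℕ} (f : (Fin p → ℂ) →ₗ[ℂ] (Fin q → ℂ)) (g : (Fin q → ℂ) →ₗ[ℂ] (Fin p → ℂ)) :
      trace ℂ _ (f ∘ₗ g) = trace ℂ _ (g ∘ₗ f) := trace_comp_comm' g f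
  simp only [comp_sub, sub_comp, map_sub, comp_assoc]
  rw [cycle y, cycle y, cycle x (b' ∘ₗ a' ∘ₗ y), cycle x (b' ∘ₗ v ∘ₗ a)]
  simp only [comp_assoc]
  ring

section Cyclic

variable {ℓ : ℕ} [NeZero ℓ]

lemma sum_comp_add_one {M : Type*} [AddCommMonoid M] (f : ZMod ℓ → M) :
    ∑ i, f (i + 1) = ∑ i, f i :=
  Equiv.sum_comp (Equiv.addRight (1 : ZMod ℓ)) f

lemma apply_eq_apply_zero_of_periodic {α : Type*} {u : ZMod ℓ → α}
    (h : Function.Periodic u 1) (i : ZMod ℓ) : u i = u 0 := by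
  rw [← ZMod.natCast_zmod_val i]
  induction i.val with
  | zero => simp
  | succ m ih => rw [Nat.cast_succ, h, ih]

variable (ℓ) in
def cartanForm : LinearMap.BilinForm ℤ (ZMod ℓ → ℤ) :=
  LinearMap.mk₂ ℤ (fun x y => ∑ i, (x i - x (i + 1)) * (y i - y (i + 1)))
    (fun x x' y => by simp only [Pi.add_apply, ← Finset.sum_add_distrib]; congr 1; ext; ring)
    (fun c x y => by simp only [Pi.smul_apply, smul_eq_mul, Finset.mul_sum]; congr 1; ext; ring)
    (fun x y y' => by simp only [Pi.add_apply, ← Finset.sum_add_distrib]; congr 1; ext; ring)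
    (fun c x y => by simp only [Pi.smul_apply, smul_eq_mul, Finset.mul_sum]; congr 1; ext; ring)

lemma cartanForm_apply (x y : ZMod ℓ → ℤ) :
    cartanForm ℓ x y = ∑ i, (x i - x (i + 1)) * (y i - y (i + 1)) := rfl

lemma cartanForm_apply_eq (x y : ZMod ℓ → ℤ) :
    cartanForm ℓ x y =
      2 * ∑ i, x i * y i - (∑ i, x (i + 1) * y i + ∑ i, x i * y (i + 1)) := by
  have e := sum_comp_add_one fun i => x i * y i
  simp only [cartanForm_apply, sub_mul, mul_sub, Finset.sum_sub_distrib, e]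
  ring

lemma cartanForm_self_nonneg (x : ZMod ℓ → ℤ) : 0 ≤ cartanForm ℓ x x :=
  Finset.sum_nonneg fun _ _ => mul_self_nonneg _

lemma eq_const_of_cartanForm_self_eq_zero {x : ZMod ℓ → ℤ} (hx : cartanForm ℓ x x = 0)
    (i : ZMod ℓ) : x i = x 0 := by
  refine apply_eq_apply_zero_of_periodic (fun j => ?_) i
  have := (Finset.sum_eq_zero_iff_of_nonneg fun _ _ => mul_self_nonneg _).mp hx j
    (Finset.mem_univ j)
  linarith [mul_self_eq_zero.mp this]

def weightForm (θ : ZMod ℓ → ℂ) : (ZMod ℓ → ℤ) →ₗ[ℤ] ℂ :=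
  ∑ i, θ i • (Int.castAddHom ℂ).toIntLinearMap ∘ₗ LinearMap.proj i

lemma weightForm_apply (θ : ZMod ℓ → ℂ) (x : ZMod ℓ → ℤ) :
    weightForm θ x = ∑ i, θ i * x i := by
  simp [weightForm]

lemma eq_zero_of_cartanForm_self_eq_zero {θ : ZMod ℓ → ℂ} (hθ : ∑ i, θ i ≠ 0)
    {x : ZMod ℓ → ℤ} (hx : cartanForm ℓ x x = 0) (hθx : weightForm θ x = 0) : x = 0 := by
  have hconst := eq_const_of_cartanForm_self_eq_zero hx
  simp only [weightForm_apply, hconst, ← Finset.sum_mul] at hθx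
  have h0 : x 0 = 0 := by exact_mod_cast (mul_eq_zero.mp hθx).resolve_left hθ
  ext i
  rw [hconst, h0, Pi.zero_apply]

end Cyclic

variable {ℓ : ℕ} {θ : ZMod ℓ → ℂ}

lemma Rep.sum_theta_mul_dim_eq_zero [NeZero ℓ] {d : ZMod ℓ → ℕ} (R : Rep ℓ θ d) :
    ∑ i, θ i * d i = 0 := by
  set t : ZMod ℓ → ℂ := fun i => trace ℂ _ (R.X i ∘ₗ R.Y i)
  have h : ∀ i, θ (i + 1) * d (i + 1) = t (i + 1) - t i := fun i => by
    have := congrArg (trace ℂ _) (R.rel i)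
    rwa [map_sub, trace_comp_comm' (R.X i), map_smul, trace_id, finrank_fin_fun, smul_eq_mul,
      eq_comm] at this
  rw [← sum_comp_add_one, Finset.sum_congr rfl fun i _ => h i, Finset.sum_sub_distrib,
    sum_comp_add_one t, sub_self]

lemma Rep.X_comp_Y_eq {d : ZMod ℓ → ℕ} (R : Rep ℓ θ d) (i : ZMod ℓ) :
    R.X (i + 1) ∘ₗ R.Y (i + 1) = θ (i + 1) • LinearMap.id + R.Y i ∘ₗ R.X i :=
  eq_add_of_sub_eq (R.rel i)

lemma IsSimple.sum_dim_pos [NeZero ℓ] {d : ZMod ℓ → ℕ} {R : Rep ℓ θ d} (hR : IsSimple R) :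
    0 < ∑ i, (d i : ℤ) := by
  obtain ⟨i, hi⟩ := hR.1
  exact Finset.sum_pos' (fun _ _ => Int.natCast_nonneg _) ⟨i, Finset.mem_univ i, by omega⟩

variable (ℓ) in
abbrev VertexHoms (dM dN : ZMod ℓ → ℕ) :=
  ∀ i : ZMod ℓ, (Fin (dM i) → ℂ) →ₗ[ℂ] (Fin (dN i) → ℂ)

variable (ℓ) in
abbrev ArrowHoms (dM dN : ZMod ℓ → ℕ) :=
  (∀ i : ZMod ℓ, (Fin (dM (i + 1)) → ℂ) →ₗ[ℂ] (Fin (dN i) → ℂ)) ×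
    (∀ i : ZMod ℓ, (Fin (dM i) → ℂ) →ₗ[ℂ] (Fin (dN (i + 1)) → ℂ))

section Hom

variable {dM dN : ZMod ℓ → ℕ}

def IsHom (M : Rep ℓ θ dM) (N : Rep ℓ θ dN) (φ : VertexHoms ℓ dM dN) : Prop :=
  (∀ i, φ i ∘ₗ M.X i = N.X i ∘ₗ φ (i + 1)) ∧ ∀ i, φ (i + 1) ∘ₗ M.Y i = N.Y i ∘ₗ φ i

variable {M : Rep ℓ θ dM} {N : Rep ℓ θ dN} {φ : VertexHoms ℓ dM dN}

def IsHom.ker (hφ : IsHom M N φ) : Subrep M where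
  U i := LinearMap.ker (φ i)
  hX i v hv := by
    rw [mem_ker, ← comp_apply, hφ.1, comp_apply, mem_ker.mp hv, map_zero]
  hY i v hv := by
    rw [mem_ker, ← comp_apply, hφ.2, comp_apply, mem_ker.mp hv, map_zero]

def IsHom.range (hφ : IsHom M N φ) : Subrep N where
  U i := LinearMap.range (φ i)
  hX := by
    rintro i _ ⟨v, rfl⟩
    exact ⟨M.X i v, by rw [← comp_apply, hφ.1, comp_apply]⟩
  hY := by
    rintro i _ ⟨v, rfl⟩
    exact ⟨M.Y i v, by rw [← comp_apply, hφ.2, comp_apply]⟩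

lemma IsHom.eq_zero (hφ : IsHom M N φ) (hM : IsSimple M) (hN : IsSimple N) (hne : dM ≠ dN) :
    φ = 0 := by
  rcases hM.2 hφ.ker with hker | hker
  · rcases hN.2 hφ.range with hrange | hrange
    · exact funext fun i => range_eq_bot.mp (hrange i)
    · refine absurd (funext fun i => ?_) hne
      simpa using (LinearEquiv.ofBijective (φ i)
        ⟨ker_eq_bot.mp (hker i), range_eq_top.mp (hrange i)⟩).finrank_eq
  · exact funext fun i => ker_eq_top.mp (hker i)

variable (M N) in
def homDefect : VertexHoms ℓ dM dN →ₗ[ℂ] ArrowHoms ℓ dM dN where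
  toFun φ := (fun i => φ i ∘ₗ M.X i - N.X i ∘ₗ φ (i + 1),
    fun i => φ (i + 1) ∘ₗ M.Y i - N.Y i ∘ₗ φ i)
  map_add' φ ψ := by
    ext1 <;> funext i <;> simp only [Pi.add_apply, add_comp, comp_add, Prod.fst_add,
      Prod.snd_add] <;> abel
  map_smul' c φ := by
    ext1 <;> funext i <;> simp [smul_sub, smul_comp, comp_smul]

lemma homDefect_eq_zero_iff : homDefect M N φ = 0 ↔ IsHom M N φ := by
  simp [homDefect, IsHom, Prod.ext_iff, funext_iff, sub_eq_zero]

lemma homDefect_injective (hM : IsSimple M) (hN : IsSimple N) (hne : dM ≠ dN) :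
    Function.Injective (homDefect M N) := by
  rw [← ker_eq_bot, ker_eq_bot']
  exact fun φ hφ => (homDefect_eq_zero_iff.mp hφ).eq_zero hM hN hne

end Hom

section Pairing

variable [NeZero ℓ] {dM dN : ZMod ℓ → ℕ}

variable (ℓ dM dN) in
noncomputable def tracePairing : ArrowHoms ℓ dM dN →ₗ[ℂ] ArrowHoms ℓ dN dM →ₗ[ℂ] ℂ :=
  LinearMap.mk₂ ℂ
    (fun x ξ => ∑ i, trace ℂ _ (ξ.2 i ∘ₗ x.1 i) - ∑ i, trace ℂ _ (ξ.1 i ∘ₗ x.2 i))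
    (fun x y ξ => by simp only [Prod.fst_add, Prod.snd_add, Pi.add_apply, comp_add, map_add,
      Finset.sum_add_distrib]; ring)
    (fun c x ξ => by simp only [Prod.smul_fst, Prod.smul_snd, Pi.smul_apply, comp_smul, map_smul,
      smul_eq_mul, ← Finset.mul_sum]; ring)
    (fun x ξ η => by simp only [Prod.fst_add, Prod.snd_add, Pi.add_apply, add_comp, map_add,
      Finset.sum_add_distrib]; ring)
    (fun c x ξ => by simp only [Prod.smul_fst, Prod.smul_snd, Pi.smul_apply, smul_comp, map_smul,
      smul_eq_mul, ← Finset.mul_sum]; ring)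

lemma tracePairing_apply (x : ArrowHoms ℓ dM dN) (ξ : ArrowHoms ℓ dN dM) :
    tracePairing ℓ dM dN x ξ =
      ∑ i, trace ℂ _ (ξ.2 i ∘ₗ x.1 i) - ∑ i, trace ℂ _ (ξ.1 i ∘ₗ x.2 i) := rfl

lemma tracePairing_flip_injective : Function.Injective (tracePairing ℓ dM dN).flip := by
  rw [← ker_eq_bot, ker_eq_bot']
  intro ξ hξ
  have h (x : ArrowHoms ℓ dM dN) : tracePairing ℓ dM dN x ξ = 0 := LinearMap.congr_fun hξ x
  refine Prod.ext (funext fun i => ?_) (funext fun i => ?_) <;>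
    refine eq_zero_of_forall_trace_comp_eq_zero fun f => ?_
  · have := h (0, Pi.single i f)
    simp only [tracePairing_apply, Pi.zero_apply, comp_zero, map_zero, Finset.sum_const_zero,
      zero_sub, neg_eq_zero] at this
    rwa [Fintype.sum_eq_single i fun j hj => by rw [Pi.single_eq_of_ne hj, comp_zero, map_zero],
      Pi.single_eq_same] at this
  · have := h (Pi.single i f, 0)
    simp only [tracePairing_apply, Pi.zero_apply, comp_zero, map_zero, Finset.sum_const_zero,
      sub_zero] at this
    rwa [Fintype.sum_eq_single i fun j hj => by rw [Pi.single_eq_of_ne hj, comp_zero, map_zero],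
      Pi.single_eq_same] at this

lemma tracePairing_homDefect_homDefect (M : Rep ℓ θ dM) (N : Rep ℓ θ dN)
    (φ : VertexHoms ℓ dM dN) (ψ : VertexHoms ℓ dN dM) :
    tracePairing ℓ dM dN (homDefect M N φ) (homDefect N M ψ) = 0 := by
  let A : ZMod ℓ → ℂ := fun i => trace ℂ _ (ψ i ∘ₗ (N.X i ∘ₗ N.Y i) ∘ₗ φ i)
    - trace ℂ _ (ψ i ∘ₗ φ i ∘ₗ M.X i ∘ₗ M.Y i)
  -- the relations at `i + 1` add `θ (i + 1) * tr (ψ (i + 1) ∘ φ (i + 1))` to both terms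
  have hA (i : ZMod ℓ) : A (i + 1) = trace ℂ _ (ψ (i + 1) ∘ₗ (N.Y i ∘ₗ N.X i) ∘ₗ φ (i + 1))
      - trace ℂ _ (ψ (i + 1) ∘ₗ φ (i + 1) ∘ₗ M.Y i ∘ₗ M.X i) := by
    simp only [A, N.X_comp_Y_eq, M.X_comp_Y_eq, add_comp, comp_add, smul_comp, comp_smul,
      id_comp, comp_id, map_add, map_smul]
    ring
  calc tracePairing ℓ dM dN (homDefect M N φ) (homDefect N M ψ) = ∑ i, (A i - A (i + 1)) := by
        rw [tracePairing_apply, ← Finset.sum_sub_distrib]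
        exact Finset.sum_congr rfl fun i _ => by rw [hA]; exact trace_commutator_pairing ..
    _ = 0 := by rw [Finset.sum_sub_distrib, sum_comp_add_one A, sub_self]

lemma finrank_vertexHoms : finrank ℂ (VertexHoms ℓ dM dN) = ∑ i, dM i * dN i := by
  simp [finrank_pi_fintype, finrank_linearMap]

lemma finrank_arrowHoms :
    finrank ℂ (ArrowHoms ℓ dM dN) = ∑ i, dM (i + 1) * dN i + ∑ i, dM i * dN (i + 1) := by
  simp [finrank_prod, finrank_pi_fintype, finrank_linearMap]

lemma cartanForm_nonpos_of_isSimple {M : Rep ℓ θ dM} {N : Rep ℓ θ dN} (hM : IsSimple M)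
    (hN : IsSimple N) (hne : dM ≠ dN) :
    cartanForm ℓ (fun i => (dM i : ℤ)) (fun i => (dN i : ℤ)) ≤ 0 := by
  have h := finrank_add_finrank_le_of_flip_injective tracePairing_flip_injective
    (range (homDefect M N)) (range (homDefect N M)) (by
      rintro _ ⟨φ, rfl⟩ _ ⟨ψ, rfl⟩
      exact tracePairing_homDefect_homDefect M N φ ψ)
  rw [finrank_range_of_inj (homDefect_injective hM hN hne),
    finrank_range_of_inj (homDefect_injective hN hM hne.symm), finrank_vertexHoms,
    finrank_vertexHoms, finrank_arrowHoms] at h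
  simp only [mul_comm (dN _)] at h
  zify at h
  rw [cartanForm_apply_eq]
  linarith

end Pairing

/-- If `∑ θ_i ≠ 0`, the set `Σ_θ` of dimension vectors of simple
`θ`-representations is `ℤ`-linearly independent. -/
theorem sigma_linearly_independent (ℓ : ℕ) [NeZero ℓ] (θ : ZMod ℓ → ℂ)
    (ha : ∑ i : ZMod ℓ, θ i ≠ 0) (k : ℕ) (ds : Fin k → ZMod ℓ → ℕ)
    (hds : ∀ t, ∃ R : Rep ℓ θ (ds t), IsSimple R)
    (hinj : Function.Injective ds) (n : Fin k → ℤ)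
    (hsum : (∑ t : Fin k, fun i => n t * (ds t i : ℤ)) = (0 : ZMod ℓ → ℤ)) :
    ∀ t, n t = 0 := by
  have hli : LinearIndependent ℤ fun t i => (ds t i : ℤ) := by
    refine linearIndependent_of_pairwise_nonpos (cartanForm ℓ) cartanForm_self_nonneg
      (weightForm θ) (fun x => eq_zero_of_cartanForm_self_eq_zero ha) (∑ i, proj i)
      (fun t s hts => ?_) (fun t => ?_) (fun t => ?_)
    · obtain ⟨M, hM⟩ := hds t
      obtain ⟨N, hN⟩ := hds s
      exact cartanForm_nonpos_of_isSimple hM hN (hinj.ne hts)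
    · obtain ⟨R, -⟩ := hds t
      simpa [weightForm_apply] using R.sum_theta_mul_dim_eq_zero
    · obtain ⟨R, hR⟩ := hds t
      simpa using hR.sum_dim_pos
  refine Fintype.linearIndependent_iff.mp hli n (funext fun i => ?_)
  simpa using congrFun hsum i

end CM
end

section
/- Let ℓ ≥ 2, J ⊆ ℤ/ℓℤ, and let θ ∈ ℂ^(ℤ/ℓℤ) be J-standard with Σ_{i ∈ ℤ/ℓℤ} θ_i ≠ 0. For j ∈ ℤ write θ_j for θ_{(j mod ℓ)}. If a ≤ b are integers with θ_a + θ_{a+1} + ⋯ + θ_b = 0, then θ_j = 0 for every integer j with a ≤ j ≤ b. -/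
namespace CM

lemma sC_sC (ℓ : ℕ) (j : ZMod ℓ) (θ : ZMod ℓ → ℂ) : sC ℓ j (sC ℓ j θ) = θ := by
  funext i
  by_cases h : i = j
  · subst h; simp [sC]
  · simp [sC, h]

/-- `s_j` as a bijection of `ℂ^(ℤ/ℓℤ)`. -/
def sPerm (ℓ : ℕ) (j : ZMod ℓ) : Equiv.Perm (ZMod ℓ → ℂ) :=
  ⟨sC ℓ j, sC ℓ j, fun θ => sC_sC ℓ j θ, fun θ => sC_sC ℓ j θ⟩

/-- The group generated by the operators `s_j`, `j ∈ ℤ/ℓℤ`. -/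
def Wgrp (ℓ : ℕ) : Subgroup (Equiv.Perm (ZMod ℓ → ℂ)) :=
  Subgroup.closure (Set.range (sPerm ℓ))

/-- The subgroup generated by the operators `s_j`, `j ∈ J`. -/
def WJ (ℓ : ℕ) (J : Set (ZMod ℓ)) : Subgroup (Equiv.Perm (ZMod ℓ → ℂ)) :=
  Subgroup.closure (sPerm ℓ '' J)

/-- `θ` is `J`-standard if its stabilizer in `W` is exactly `W_J`. -/
def JStandard (ℓ : ℕ) (J : Set (ZMod ℓ)) (θ : ZMod ℓ → ℂ) : Prop :=
  ∀ w ∈ Wgrp ℓ, ((w : (ZMod ℓ → ℂ) → (ZMod ℓ → ℂ)) θ = θ ↔ w ∈ WJ ℓ J)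

def v (ℓ : ℕ) (j : ZMod ℓ) : ZMod ℓ → ℂ := fun i =>
  (if i = j - 1 then 1 else 0) + (if i = j + 1 then 1 else 0) + (if i = j then -2 else 0)

lemma one_ne_zero' {ℓ : ℕ} (hℓ : 2 ≤ ℓ) : (1 : ZMod ℓ) ≠ 0 := by
  haveI : Fact (1 < ℓ) := ⟨hℓ⟩; exact one_ne_zero

lemma sub_one_ne {ℓ : ℕ} (hℓ : 2 ≤ ℓ) (j : ZMod ℓ) : j ≠ j - 1 := by
  intro h
  have : (1 : ZMod ℓ) = 0 := by linear_combination h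
  exact one_ne_zero' hℓ this

lemma add_one_ne {ℓ : ℕ} (hℓ : 2 ≤ ℓ) (j : ZMod ℓ) : j ≠ j + 1 := by
  intro h
  have : (1 : ZMod ℓ) = 0 := by linear_combination -h
  exact one_ne_zero' hℓ this

lemma v_self {ℓ : ℕ} (hℓ : 2 ≤ ℓ) (j : ZMod ℓ) : v ℓ j j = -2 := by
  simp [v, sub_one_ne hℓ j, add_one_ne hℓ j]

lemma sC_eq (ℓ : ℕ) (hℓ : 2 ≤ ℓ) (j : ZMod ℓ) (ψ : ZMod ℓ → ℂ) :
    sC ℓ j ψ = ψ + ψ j • v ℓ j := by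
  funext i
  by_cases h : i = j
  · subst h
    have hL : sC ℓ i ψ i = -ψ i := by unfold sC; rw [if_pos rfl]
    rw [hL]
    simp only [Pi.add_apply, Pi.smul_apply, smul_eq_mul, v_self hℓ i]
    ring
  · have hL : sC ℓ j ψ i
        = ψ i + ((if i = j - 1 then 1 else 0) + (if i = j + 1 then 1 else 0) : ℂ) * ψ j := by
      unfold sC; rw [if_neg h]
    rw [hL]
    simp only [Pi.add_apply, Pi.smul_apply, smul_eq_mul, v, if_neg h]
    ring

lemma v_symm (ℓ : ℕ) (x y : ZMod ℓ) : v ℓ x y = v ℓ y x := by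
  unfold v
  have e1 : (y = x - 1) = (x = y + 1) :=
    propext ⟨fun h => by rw [h]; ring, fun h => by rw [h]; ring⟩
  have e2 : (y = x + 1) = (x = y - 1) :=
    propext ⟨fun h => by rw [h]; ring, fun h => by rw [h]; ring⟩
  have e3 : (y = x) = (x = y) := propext eq_comm
  simp only [e1, e2, e3]; ring

lemma cast_eq_iff_dvd (ℓ : ℕ) (x y : ℤ) : ((x : ZMod ℓ) = (y : ZMod ℓ)) ↔ (ℓ:ℤ) ∣ (y - x) := by
  rw [ZMod.intCast_eq_intCast_iff, Int.modEq_iff_dvd]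

lemma sum_split_left {M : Type*} [AddCommMonoid M] (f : ℤ → M) {a b : ℤ} (h : a ≤ b) :
    ∑ j ∈ Finset.Icc a b, f j = f a + ∑ j ∈ Finset.Icc (a+1) b, f j := by
  have : Finset.Icc a b = insert a (Finset.Icc (a+1) b) := by
    ext x; simp only [Finset.mem_Icc, Finset.mem_insert]; omega
  rw [this, Finset.sum_insert (by simp only [Finset.mem_Icc]; omega)]

lemma sum_split_top {M : Type*} [AddCommMonoid M] (f : ℤ → M) {a b : ℤ} (h : a ≤ b) :
    ∑ j ∈ Finset.Icc a b, f j = f b + ∑ j ∈ Finset.Icc a (b-1), f j := by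
  have : Finset.Icc a b = insert b (Finset.Icc a (b-1)) := by
    ext x; simp only [Finset.mem_Icc, Finset.mem_insert]; omega
  rw [this, Finset.sum_insert (by simp only [Finset.mem_Icc]; omega)]

lemma hv (ℓ : ℕ) (c : ZMod ℓ) (j : ℤ) :
    v ℓ (j : ZMod ℓ) c =
      (if c = ((j-1 : ℤ) : ZMod ℓ) then (1:ℂ) else 0)
      + (if c = ((j+1 : ℤ) : ZMod ℓ) then 1 else 0)
      + (-2) * (if c = ((j : ℤ) : ZMod ℓ) then 1 else 0) := by
  unfold v
  push_cast
  split_ifs <;> ring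

lemma tele (ℓ : ℕ) (c : ZMod ℓ) (p : ℤ) : ∀ q : ℤ, p ≤ q →
    ∑ j ∈ Finset.Icc p q, v ℓ ((j : ℤ) : ZMod ℓ) c =
      (if c = ((q+1 : ℤ) : ZMod ℓ) then (1:ℂ) else 0)
      - (if c = ((q : ℤ) : ZMod ℓ) then 1 else 0)
      - (if c = ((p : ℤ) : ZMod ℓ) then 1 else 0)
      + (if c = ((p-1 : ℤ) : ZMod ℓ) then 1 else 0) := by
  refine Int.le_induction ?_ ?_
  · rw [Finset.Icc_self, Finset.sum_singleton, hv]
    ring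
  · intro n hn ih
    rw [sum_split_top _ (by omega), hv]
    simp only [show (n+1-1 : ℤ) = n from by ring]
    rw [ih]
    ring

lemma sPerm_mem_W (ℓ : ℕ) (j : ZMod ℓ) : sPerm ℓ j ∈ Wgrp ℓ :=
  Subgroup.subset_closure (Set.mem_range_self j)

lemma key (ℓ : ℕ) [NeZero ℓ] (hℓ : 2 ≤ ℓ) (n : ℕ) :
    ∀ a b : ℤ, a ≤ b → (b - a).toNat = n → ¬ ((ℓ:ℤ) ∣ (b - a + 1)) →
    ∃ t ∈ Wgrp ℓ, ∀ ψ : ZMod ℓ → ℂ,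
      (t : (ZMod ℓ → ℂ) → (ZMod ℓ → ℂ)) ψ
        = ψ + (∑ j ∈ Finset.Icc a b, ψ ((j : ZMod ℓ)))
            • (∑ j ∈ Finset.Icc a b, v ℓ ((j : ZMod ℓ))) := by
  induction n using Nat.strong_induction_on with
  | _ n IH =>
  intro a b hab hn hdvd
  have hℓ' : (2:ℤ) ≤ (ℓ:ℤ) := by exact_mod_cast hℓ
  by_cases hba : b = a
  · subst hba
    refine ⟨sPerm ℓ ((b : ZMod ℓ)), sPerm_mem_W ℓ _, fun ψ => ?_⟩
    have happ : (⇑(sPerm ℓ ((b : ZMod ℓ)))) ψ = sC ℓ (b : ZMod ℓ) ψ := rfl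
    rw [happ, sC_eq ℓ hℓ, Finset.Icc_self, Finset.sum_singleton, Finset.sum_singleton]
  · have hlt : a < b := lt_of_le_of_ne hab (fun h => hba h.symm)
    by_cases h2 : (ℓ:ℤ) ∣ (b - a)
    · -- case 3 : ℓ ∣ b - a ; t = s_a t' s_a with t' on [a+1, b-1]
      have hq2 : (ℓ:ℤ) ≤ b - a := Int.le_of_dvd (by omega) h2
      have hba2 : a + 2 ≤ b := by omega
      have hd3 : ¬ ((ℓ:ℤ) ∣ ((b-1) - (a+1) + 1)) := by
        intro hcon
        rw [show (b-1) - (a+1) + 1 = b - a - 1 from by ring] at hcon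
        have : (ℓ:ℤ) ∣ 1 := by
          have := dvd_sub h2 hcon
          simpa using this
        have := Int.le_of_dvd one_pos this
        omega
      obtain ⟨t', ht'm, ht'⟩ := IH (n-2) (by omega) (a+1) (b-1) (by omega) (by omega) hd3
      refine ⟨sPerm ℓ (a : ZMod ℓ) * t' * sPerm ℓ (a : ZMod ℓ),
        mul_mem (mul_mem (sPerm_mem_W ℓ _) ht'm) (sPerm_mem_W ℓ _), fun ψ => ?_⟩
      have happ : (⇑(sPerm ℓ (a : ZMod ℓ) * t' * sPerm ℓ (a : ZMod ℓ))) ψ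
          = sC ℓ (a : ZMod ℓ) (⇑t' (sC ℓ (a : ZMod ℓ) ψ)) := rfl
      have hbc : ((b : ZMod ℓ)) = ((a : ZMod ℓ)) := by
        rw [cast_eq_iff_dvd]
        rw [show a - b = -(b-a) from by ring]
        exact dvd_neg.mpr h2
      have i4 : ((a : ZMod ℓ)) = ((a : ZMod ℓ)) := rfl
      have i3 : ¬ ((a : ZMod ℓ) = ((a+1 : ℤ) : ZMod ℓ)) := by
        rw [cast_eq_iff_dvd, show a + 1 - a = (1:ℤ) from by ring]
        intro hcon; have := Int.le_of_dvd one_pos hcon; omega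
      have i2 : ¬ ((a : ZMod ℓ) = ((b-1 : ℤ) : ZMod ℓ)) := by
        rw [cast_eq_iff_dvd]
        intro hcon
        have : (ℓ:ℤ) ∣ 1 := by
          have := dvd_sub h2 hcon
          simpa using this
        have := Int.le_of_dvd one_pos this; omega
      have i1 : ((a : ZMod ℓ)) = ((b-1+1 : ℤ) : ZMod ℓ) := by
        rw [cast_eq_iff_dvd, show b - 1 + 1 - a = b - a from by ring]
        exact h2
      have hT : (∑ j ∈ Finset.Icc (a+1) (b-1), v ℓ ((j : ZMod ℓ)) (a : ZMod ℓ)) = 2 := by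
        rw [tele ℓ (a : ZMod ℓ) (a+1) (b-1) (by omega)]
        rw [show (a+1-1 : ℤ) = a from by ring]
        rw [if_pos i1, if_neg i2, if_neg i3, if_pos i4]
        ring
      have hUc : (∑ j ∈ Finset.Icc (a+1) (b-1), v ℓ ((j : ZMod ℓ))) (a : ZMod ℓ) = 2 := by
        rw [Finset.sum_apply]; exact hT
      have hFA : (∑ j ∈ Finset.Icc (a+1) (b-1), (sC ℓ (a : ZMod ℓ) ψ) ((j : ZMod ℓ)))
          = (∑ j ∈ Finset.Icc (a+1) (b-1), ψ ((j : ZMod ℓ))) + ψ (a : ZMod ℓ) * 2 := by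
        rw [sC_eq ℓ hℓ]
        simp only [Pi.add_apply, Pi.smul_apply, smul_eq_mul]
        rw [Finset.sum_add_distrib, ← Finset.mul_sum]
        have : (∑ j ∈ Finset.Icc (a+1) (b-1), v ℓ (a : ZMod ℓ) ((j : ZMod ℓ)))
            = ∑ j ∈ Finset.Icc (a+1) (b-1), v ℓ ((j : ZMod ℓ)) (a : ZMod ℓ) :=
          Finset.sum_congr rfl (fun j _ => v_symm ℓ _ _)
        rw [this, hT]
      rw [happ, ht' (sC ℓ (a : ZMod ℓ) ψ)]
      rw [sum_split_left (fun j => ψ ((j : ZMod ℓ))) hab,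
          sum_split_left (fun j => v ℓ ((j : ZMod ℓ))) hab,
          sum_split_top (fun j => ψ ((j : ZMod ℓ))) (by omega : a+1 ≤ b),
          sum_split_top (fun j => v ℓ ((j : ZMod ℓ))) (by omega : a+1 ≤ b)]
      rw [hbc, hFA, sC_eq ℓ hℓ (a : ZMod ℓ) ψ]
      rw [sC_eq ℓ hℓ ((a : ZMod ℓ))]
      funext i
      simp only [Pi.add_apply, Pi.smul_apply, smul_eq_mul, hUc, v_self hℓ ((a : ZMod ℓ))]
      ring
    · -- case 2 : ¬ ℓ ∣ b - a ; t = s_a t' s_a with t' on [a+1, b]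
      have hd2 : ¬ ((ℓ:ℤ) ∣ (b - (a+1) + 1)) := by
        rw [show b - (a+1) + 1 = b - a from by ring]; exact h2
      obtain ⟨t', ht'm, ht'⟩ := IH (n-1) (by omega) (a+1) b (by omega) (by omega) hd2
      refine ⟨sPerm ℓ (a : ZMod ℓ) * t' * sPerm ℓ (a : ZMod ℓ),
        mul_mem (mul_mem (sPerm_mem_W ℓ _) ht'm) (sPerm_mem_W ℓ _), fun ψ => ?_⟩
      have happ : (⇑(sPerm ℓ (a : ZMod ℓ) * t' * sPerm ℓ (a : ZMod ℓ))) ψ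
          = sC ℓ (a : ZMod ℓ) (⇑t' (sC ℓ (a : ZMod ℓ) ψ)) := rfl
      have i1 : ¬ ((a : ZMod ℓ) = ((b+1 : ℤ) : ZMod ℓ)) := by
        rw [cast_eq_iff_dvd, show b + 1 - a = b - a + 1 from by ring]
        exact hdvd
      have i2 : ¬ ((a : ZMod ℓ) = ((b : ℤ) : ZMod ℓ)) := by
        rw [cast_eq_iff_dvd]; exact h2
      have i3 : ¬ ((a : ZMod ℓ) = ((a+1 : ℤ) : ZMod ℓ)) := by
        rw [cast_eq_iff_dvd, show a + 1 - a = (1:ℤ) from by ring]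
        intro hcon; have := Int.le_of_dvd one_pos hcon; omega
      have hT : (∑ j ∈ Finset.Icc (a+1) b, v ℓ ((j : ZMod ℓ)) (a : ZMod ℓ)) = 1 := by
        rw [tele ℓ (a : ZMod ℓ) (a+1) b (by omega)]
        rw [show (a+1-1 : ℤ) = a from by ring]
        rw [if_neg i1, if_neg i2, if_neg i3, if_pos rfl]
        ring
      have hUc : (∑ j ∈ Finset.Icc (a+1) b, v ℓ ((j : ZMod ℓ))) (a : ZMod ℓ) = 1 := by
        rw [Finset.sum_apply]; exact hT
      have hFA : (∑ j ∈ Finset.Icc (a+1) b, (sC ℓ (a : ZMod ℓ) ψ) ((j : ZMod ℓ)))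
          = (∑ j ∈ Finset.Icc (a+1) b, ψ ((j : ZMod ℓ))) + ψ (a : ZMod ℓ) * 1 := by
        rw [sC_eq ℓ hℓ]
        simp only [Pi.add_apply, Pi.smul_apply, smul_eq_mul]
        rw [Finset.sum_add_distrib, ← Finset.mul_sum]
        have : (∑ j ∈ Finset.Icc (a+1) b, v ℓ (a : ZMod ℓ) ((j : ZMod ℓ)))
            = ∑ j ∈ Finset.Icc (a+1) b, v ℓ ((j : ZMod ℓ)) (a : ZMod ℓ) :=
          Finset.sum_congr rfl (fun j _ => v_symm ℓ _ _)
        rw [this, hT]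
      rw [happ, ht' (sC ℓ (a : ZMod ℓ) ψ)]
      rw [sum_split_left (fun j => ψ ((j : ZMod ℓ))) hab,
          sum_split_left (fun j => v ℓ ((j : ZMod ℓ))) hab]
      rw [hFA, sC_eq ℓ hℓ (a : ZMod ℓ) ψ]
      rw [sC_eq ℓ hℓ ((a : ZMod ℓ))]
      funext i
      simp only [Pi.add_apply, Pi.smul_apply, smul_eq_mul, hUc, v_self hℓ ((a : ZMod ℓ))]
      ring


lemma sum_Ico_split {M : Type*} [AddCommMonoid M] (f : ℤ → M) {a b c : ℤ}
    (h1 : a ≤ b) (h2 : b ≤ c) :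
    ∑ j ∈ Finset.Ico a c, f j = (∑ j ∈ Finset.Ico a b, f j) + ∑ j ∈ Finset.Ico b c, f j := by
  rw [← Finset.sum_union (by
    rw [Finset.disjoint_left]
    intro x hx hx'
    simp only [Finset.mem_Ico] at hx hx'
    omega)]
  congr 1
  ext x
  simp only [Finset.mem_union, Finset.mem_Ico]
  omega

lemma one_cycle (ℓ : ℕ) [NeZero ℓ] {M : Type*} [AddCommMonoid M] (F : ZMod ℓ → M) (a : ℤ) :
    ∑ j ∈ Finset.Ico a (a + ℓ), F ((j : ZMod ℓ)) = ∑ i : ZMod ℓ, F i := by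
  refine Finset.sum_nbij' (fun j => ((j : ZMod ℓ))) (fun i => a + ((i - (a : ZMod ℓ)).val : ℤ))
    ?_ ?_ ?_ ?_ ?_
  · intro x hx; exact Finset.mem_univ _
  · intro i _
    simp only [Finset.mem_Ico]
    have := ZMod.val_lt (i - (a : ZMod ℓ))
    omega
  · intro j hj
    simp only [Finset.mem_Ico] at hj
    have h1 : ((j : ZMod ℓ)) - ((a : ZMod ℓ)) = (((j - a).toNat : ℕ) : ZMod ℓ) := by
      have e : ((j - a : ℤ) : ZMod ℓ) = (((j - a).toNat : ℕ) : ZMod ℓ) := by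
        rw [← Int.cast_natCast, Int.toNat_of_nonneg (by omega)]
      rw [← e]; push_cast; ring
    show a + ((((j : ZMod ℓ)) - ((a : ZMod ℓ))).val : ℤ) = j
    rw [h1, ZMod.val_natCast, Nat.mod_eq_of_lt (by omega)]
    omega
  · intro i _
    push_cast
    rw [ZMod.natCast_rightInverse (i - (a : ZMod ℓ))]
    ring
  · intro j _; rfl

lemma m_cycle (ℓ : ℕ) [NeZero ℓ] {M : Type*} [AddCommMonoid M] (F : ZMod ℓ → M) :
    ∀ (m : ℕ) (a : ℤ), ∑ j ∈ Finset.Ico a (a + ℓ * m), F ((j : ZMod ℓ)) = m • (∑ i : ZMod ℓ, F i) := by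
  intro m
  induction m with
  | zero => intro a; simp
  | succ m ih =>
    intro a
    have hsplit : ∑ j ∈ Finset.Ico a (a + ℓ * (m+1)), F ((j : ZMod ℓ))
        = (∑ j ∈ Finset.Ico a (a + ℓ), F ((j : ZMod ℓ)))
          + ∑ j ∈ Finset.Ico (a + ℓ) (a + ℓ * (m+1)), F ((j : ZMod ℓ)) := by
      refine sum_Ico_split _ (by omega) ?h2
      case h2 =>
        have h1 : (1:ℤ) ≤ (ℓ:ℤ) := by exact_mod_cast Nat.one_le_iff_ne_zero.mpr (NeZero.ne ℓ)
        nlinarith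
    push_cast
    rw [hsplit, one_cycle]
    have := ih (a + ℓ)
    rw [show (a + (ℓ:ℤ)) + ℓ * m = a + ℓ * ((m : ℤ)+1) from by ring] at this
    rw [this, succ_nsmul']


lemma fib (ℓ : ℕ) [NeZero ℓ] {M : Type*} [AddCommMonoid M] [Module ℂ M] (a b : ℤ)
    (F : ZMod ℓ → M) :
    ∑ j ∈ Finset.Icc a b, F ((j : ZMod ℓ))
      = ∑ i : ZMod ℓ, ((((Finset.Icc a b).filter (fun j : ℤ => ((j : ZMod ℓ) = i))).card : ℂ)) • F i := by
  classical
  rw [← Finset.sum_fiberwise (Finset.Icc a b) (fun j => ((j : ZMod ℓ))) (fun j => F ((j : ZMod ℓ)))]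
  refine Finset.sum_congr rfl (fun i _ => ?_)
  have h1 : ∀ j ∈ (Finset.Icc a b).filter (fun j : ℤ => ((j : ZMod ℓ) = i)),
      F ((j : ZMod ℓ)) = F i := fun j hj => by rw [(Finset.mem_filter.mp hj).2]
  rw [Finset.sum_congr rfl h1, Finset.sum_const, Nat.cast_smul_eq_nsmul]

lemma WJ_diff (ℓ : ℕ) [NeZero ℓ] (hℓ : 2 ≤ ℓ) (J : Set (ZMod ℓ)) {w : Equiv.Perm (ZMod ℓ → ℂ)}
    (hw : w ∈ WJ ℓ J) :
    ∀ ψ : ZMod ℓ → ℂ, ∃ c : ZMod ℓ → ℂ, (∀ i, i ∉ J → c i = 0) ∧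
      ((w : (ZMod ℓ → ℂ) → (ZMod ℓ → ℂ)) ψ - ψ) = ∑ i : ZMod ℓ, c i • v ℓ i := by
  classical
  refine Subgroup.closure_induction ?_ ?_ ?_ ?_ hw
  · rintro x ⟨j, hj, rfl⟩ ψ
    refine ⟨fun i => if i = j then ψ j else 0, ?_, ?_⟩
    · intro i hi
      show (if i = j then ψ j else 0) = 0
      rw [if_neg]; rintro rfl; exact hi hj
    · have happ : (⇑(sPerm ℓ j)) ψ = sC ℓ j ψ := rfl
      rw [happ, sC_eq ℓ hℓ, add_sub_cancel_left]
      rw [Finset.sum_eq_single_of_mem j (Finset.mem_univ j)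
        (fun i _ hij => by
          show (if i = j then ψ j else 0) • v ℓ i = 0
          rw [if_neg hij, zero_smul])]
      show ψ j • v ℓ j = (if j = j then ψ j else 0) • v ℓ j
      rw [if_pos rfl]
  · intro ψ
    exact ⟨0, fun i _ => rfl, by simp⟩
  · intro x y hx hy px py ψ
    obtain ⟨c1, h1, e1⟩ := px ((⇑y) ψ)
    obtain ⟨c2, h2, e2⟩ := py ψ
    refine ⟨c1 + c2, fun i hi => by simp [Pi.add_apply, h1 i hi, h2 i hi], ?_⟩
    have happ : (⇑(x * y)) ψ = (⇑x) ((⇑y) ψ) := rfl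
    have hsplit : (⇑x) ((⇑y) ψ) - ψ = ((⇑x) ((⇑y) ψ) - (⇑y) ψ) + ((⇑y) ψ - ψ) := by abel
    rw [happ, hsplit, e1, e2, ← Finset.sum_add_distrib]
    refine Finset.sum_congr rfl (fun i _ => ?_)
    rw [Pi.add_apply, add_smul]
  · intro x hx px ψ
    obtain ⟨c1, h1, e1⟩ := px ((⇑x⁻¹) ψ)
    refine ⟨-c1, fun i hi => by simp [Pi.neg_apply, h1 i hi], ?_⟩
    have hxx : (⇑x) ((⇑x⁻¹) ψ) = ψ := by
      have : (⇑x⁻¹) ψ = x.symm ψ := rfl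
      rw [this]; exact x.apply_symm_apply ψ
    have hsplit : (⇑x⁻¹) ψ - ψ = -((⇑x) ((⇑x⁻¹) ψ) - (⇑x⁻¹) ψ) := by rw [hxx]; abel
    rw [hsplit, e1, ← Finset.sum_neg_distrib]
    refine Finset.sum_congr rfl (fun i _ => ?_)
    rw [Pi.neg_apply, neg_smul]

/-- If `θ` is `J`-standard with `∑ θ_i ≠ 0` and a consecutive sum
`θ_a + ⋯ + θ_b` (indices mod `ℓ`) vanishes, then each `θ_j`, `a ≤ j ≤ b`, vanishes. -/
theorem consecutive_sum_zero (ℓ : ℕ) [NeZero ℓ] (hℓ : 2 ≤ ℓ) (J : Set (ZMod ℓ))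
    (θ : ZMod ℓ → ℂ) (hst : JStandard ℓ J θ) (ha : ∑ i : ZMod ℓ, θ i ≠ 0)
    (a b : ℤ) (hab : a ≤ b) (hsum : ∑ i ∈ Finset.Icc a b, θ (i : ZMod ℓ) = 0) :
    ∀ j ∈ Finset.Icc a b, θ (j : ZMod ℓ) = 0 := by
  classical
  have hℓ' : (2:ℤ) ≤ (ℓ:ℤ) := by exact_mod_cast hℓ
  have hθJ : ∀ i : ZMod ℓ, i ∈ J → θ i = 0 := by
    intro i hi
    have hfix := (hst _ (sPerm_mem_W ℓ i)).mpr
      (Subgroup.subset_closure (Set.mem_image_of_mem _ hi))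
    have h2 := congrFun hfix i
    have h3 : sC ℓ i θ i = -θ i := by unfold sC; rw [if_pos rfl]
    have h4 : -θ i = θ i := by rw [← h3]; exact h2
    have : (2:ℂ) * θ i = 0 := by linear_combination -h4
    simpa using this
  by_cases hdvd : (ℓ:ℤ) ∣ (b - a + 1)
  · exfalso
    obtain ⟨q, hq⟩ := hdvd
    have hq0 : 0 ≤ q := by nlinarith
    have hb : a + (ℓ:ℤ) * ((q.toNat : ℕ) : ℤ) = b + 1 := by
      rw [Int.toNat_of_nonneg hq0]; linarith [hq]
    have hm := m_cycle ℓ θ q.toNat a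
    rw [hb] at hm
    have hIcc : Finset.Icc a b = Finset.Ico a (b+1) := by
      ext x; simp only [Finset.mem_Icc, Finset.mem_Ico]; omega
    rw [hIcc, hm] at hsum
    rw [nsmul_eq_mul] at hsum
    rcases mul_eq_zero.mp hsum with h | h
    · have h0 : q.toNat = 0 := by exact_mod_cast h
      have hq00 : q = 0 := by omega
      rw [hq00, mul_zero] at hq
      omega
    · exact ha h
  · obtain ⟨t, htm, ht⟩ := key ℓ hℓ (b - a).toNat a b hab rfl hdvd
    have htθ : (⇑t) θ = θ := by rw [ht θ, hsum, zero_smul, add_zero]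
    have htJ : t ∈ WJ ℓ J := (hst t htm).mp htθ
    obtain ⟨c, hc0, hrep⟩ := WJ_diff ℓ hℓ J htJ (fun i => if i = (a : ZMod ℓ) then 1 else 0)
    have hκ : (∑ j ∈ Finset.Icc a b,
          (fun i => if i = (a : ZMod ℓ) then (1:ℂ) else 0) ((j : ZMod ℓ)))
        = (((Finset.Icc a b).filter (fun j : ℤ => ((j:ZMod ℓ) = (a : ZMod ℓ)))).card : ℂ) := by
      simp only []
      exact Finset.sum_boole _ _
    set κ : ℂ := (((Finset.Icc a b).filter (fun j : ℤ => ((j:ZMod ℓ) = (a : ZMod ℓ)))).card : ℂ) with hκdef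
    have hκ0 : κ ≠ 0 := by
      rw [hκdef]
      refine Nat.cast_ne_zero.mpr (Finset.card_ne_zero_of_mem (Finset.mem_filter.mpr
        ⟨Finset.mem_Icc.mpr ⟨le_refl a, hab⟩, rfl⟩))
    have hrep2 : κ • (∑ j ∈ Finset.Icc a b, v ℓ ((j:ZMod ℓ))) = ∑ i : ZMod ℓ, c i • v ℓ i := by
      rw [← hκ, ← hrep, ht]
      rw [add_sub_cancel_left]
    have hU := fib ℓ a b (v ℓ)
    have hθv := fib ℓ a b θ
    set N : ZMod ℓ → ℂ :=
      fun i => (((Finset.Icc a b).filter (fun j : ℤ => ((j:ZMod ℓ) = i))).card : ℂ) with hNdef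
    set d : ZMod ℓ → ℂ := fun i => N i - κ⁻¹ * c i with hddef
    have hzero : ∑ i : ZMod ℓ, d i • v ℓ i = 0 := by
      have e1 : ∀ i : ZMod ℓ, d i • v ℓ i = N i • v ℓ i - κ⁻¹ • (c i • v ℓ i) := by
        intro i
        rw [hddef]
        simp only [sub_smul, smul_smul]
      rw [Finset.sum_congr rfl (fun i _ => e1 i), Finset.sum_sub_distrib,
        ← Finset.smul_sum, ← hrep2, ← hU, smul_smul, inv_mul_cancel₀ hκ0, one_smul, sub_self]
    have hH : ∀ k : ZMod ℓ, d (k+1) + d (k-1) - 2 * d k = 0 := by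
      intro k
      have hz := congrFun hzero k
      rw [Finset.sum_apply] at hz
      have e : ∀ i : ZMod ℓ, (d i • v ℓ i) k
          = (if i = k+1 then d i else 0) + (if i = k-1 then d i else 0)
            + (if i = k then (-2) * d i else 0) := by
        intro i
        rw [Pi.smul_apply, smul_eq_mul]
        have e1 : (k = i - 1) = (i = k + 1) :=
          propext ⟨fun h => by rw [h]; ring, fun h => by rw [h]; ring⟩
        have e2 : (k = i + 1) = (i = k - 1) :=
          propext ⟨fun h => by rw [h]; ring, fun h => by rw [h]; ring⟩
        have e3 : (k = i) = (i = k) := propext eq_comm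
        simp only [v, e1, e2, e3]
        split_ifs <;> ring
      rw [Finset.sum_congr rfl (fun i _ => e i)] at hz
      rw [Finset.sum_add_distrib, Finset.sum_add_distrib,
        Finset.sum_ite_eq' Finset.univ (k+1) d, Finset.sum_ite_eq' Finset.univ (k-1) d,
        Finset.sum_ite_eq' Finset.univ k (fun i => (-2) * d i)] at hz
      simp only [Finset.mem_univ, if_true, Pi.zero_apply] at hz
      linear_combination hz
    have hinc : ∀ k : ZMod ℓ, d (k+1) - d k = d 1 - d 0 := by
      have hnat : ∀ m : ℕ, d ((m:ZMod ℓ)+1) - d (m:ZMod ℓ) = d 1 - d 0 := by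
        intro m
        induction m with
        | zero => norm_num
        | succ m ih =>
          have hh := hH ((m:ZMod ℓ)+1)
          rw [add_sub_cancel_right] at hh
          push_cast
          linear_combination hh + ih
      intro k
      obtain ⟨m, rfl⟩ := ZMod.natCast_rightInverse.surjective k
      exact hnat m
    have he : d 1 - d 0 = 0 := by
      have h1 : ∑ k : ZMod ℓ, (d (k+1) - d k) = 0 := by
        rw [Finset.sum_sub_distrib, sub_eq_zero]
        exact Fintype.sum_equiv (Equiv.addRight 1) _ _ (fun k => rfl)
      have h2 : ∑ k : ZMod ℓ, (d (k+1) - d k) = (ℓ : ℕ) • (d 1 - d 0) := by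
        rw [Finset.sum_congr rfl (fun k _ => hinc k), Finset.sum_const,
          Finset.card_univ, ZMod.card]
      rw [h2, nsmul_eq_mul] at h1
      rcases mul_eq_zero.mp h1 with h | h
      · exact absurd (by exact_mod_cast h) (NeZero.ne ℓ)
      · exact h
    have hconst : ∀ k : ZMod ℓ, d k = d 0 := by
      have hnat : ∀ m : ℕ, d ((m:ZMod ℓ)) = d 0 := by
        intro m
        induction m with
        | zero => norm_num
        | succ m ih =>
          have hh := hinc ((m:ZMod ℓ))
          push_cast
          linear_combination hh + ih + he
      intro k
      obtain ⟨m, rfl⟩ := ZMod.natCast_rightInverse.surjective k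
      exact hnat m
    have hlam : d 0 * (∑ i : ZMod ℓ, θ i) = 0 := by
      have h1 : ∑ i : ZMod ℓ, N i • θ i = 0 := by rw [← hθv]; exact hsum
      simp only [smul_eq_mul] at h1
      have h2 : ∑ i : ZMod ℓ, (N i * θ i - d 0 * θ i) = 0 := by
        refine Finset.sum_eq_zero (fun i _ => ?_)
        by_cases hiJ : i ∈ J
        · rw [hθJ i hiJ]; ring
        · have hNi : N i = d 0 := by
            rw [← hconst i, hddef]
            simp only [hc0 i hiJ, mul_zero, sub_zero]
          rw [hNi]; ring
      rw [Finset.sum_sub_distrib, ← Finset.mul_sum] at h2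
      linear_combination h1 - h2
    have hd0 : d 0 = 0 := by
      rcases mul_eq_zero.mp hlam with h | h
      · exact h
      · exact absurd h ha
    intro j hj
    by_cases hjJ : ((j : ZMod ℓ)) ∈ J
    · exact hθJ _ hjJ
    · exfalso
      have hNj : N ((j:ZMod ℓ)) = 0 := by
        have h1 : d ((j:ZMod ℓ)) = N ((j:ZMod ℓ)) := by
          rw [hddef]; simp only [hc0 _ hjJ, mul_zero, sub_zero]
        rw [← h1, hconst, hd0]
      have hcard : ((Finset.Icc a b).filter (fun x : ℤ => ((x:ZMod ℓ) = (j:ZMod ℓ)))).card = 0 := by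
        have h2 := hNj
        rw [hNdef] at h2
        simp only [] at h2
        exact_mod_cast h2
      have hmem : j ∈ (Finset.Icc a b).filter (fun x : ℤ => ((x:ZMod ℓ) = (j:ZMod ℓ))) :=
        Finset.mem_filter.mpr ⟨hj, rfl⟩
      rw [Finset.card_eq_zero] at hcard
      rw [hcard] at hmem
      exact absurd hmem (Finset.notMem_empty j)


end CM
end
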